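/- arXiv:2112.02527 — 7 statements merged into one kernel-verified Lean document; each statement's English description precedes it below -/
import Mathlib

section
/- For a connected graph G of order n ≥ 2 with diameter 2, the distance Laplacian eigenvalues satisfy ρ^L_i(G) = 2n − μ_{n−i}(G) for i = 1, 2, ..., n−1, where μ_1 ≥ μ_2 ≥ ... ≥ μ_n = 0 are the Laplacian eigenvalues of G. -/
/-! For a connected graph of diameter two, distinct vertices are at distance 1 or 2 according as
they are adjacent in `G` or in `Gᶜ`, so `D^L(G) = L(G) + 2 L(Gᶜ) = 2n I - 2J - L(G)`, using
`L(G) + L(Gᶜ) = nI - J`. An eigenvector of `L(G)` for `μ ≠ 0` is orthogonal to the all-ones vector,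
so it is an eigenvector of `D^L(G)` for `2n - μ`; one for `μ = 0` is constant, so `D^L(G)` kills it.
Hence `D^L(G) = g(L(G))` with `g 0 = 0` and `g μ = 2n - μ` otherwise. As `0` is a simple Laplacian
eigenvalue of a connected graph, the spectrum of `D^L(G)` is `0` together with the `2n - μ` for the
nonzero Laplacian eigenvalues `μ`, all nonnegative because `D^L(G) = L(G) + 2 L(Gᶜ)` is positive
semidefinite; listing it in nonincreasing order reverses the order of the `μ`. -/

open Finset Matrix BigOperators

variable {V : Type*} [Fintype V] [DecidableEq V]

/-- The transmission of a vertex: the sum of distances to all other vertices. -/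
noncomputable def transmission (G : SimpleGraph V) (v : V) : ℕ := ∑ u, G.dist v u

/-- The distance matrix of a graph. -/
noncomputable def distMatrix (G : SimpleGraph V) : Matrix V V ℝ :=
  fun u v => (G.dist u v : ℝ)

/-- The distance Laplacian matrix `Tr(G) - D(G)`. -/
noncomputable def distLap (G : SimpleGraph V) : Matrix V V ℝ :=
  Matrix.diagonal (fun v => (transmission G v : ℝ)) - distMatrix G

/-- The Wiener index of a graph. -/
noncomputable def wiener (G : SimpleGraph V) : ℝ := (∑ v, (transmission G v : ℝ)) / 2

/-- `ρ` lists the eigenvalues of the (Hermitian) matrix `M` in nonincreasing order. -/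
def IsSpectrum {n : ℕ} (M : Matrix (Fin n) (Fin n) ℝ) (ρ : Fin n → ℝ) : Prop :=
  Antitone ρ ∧ ∃ (hM : M.IsHermitian) (e : Fin n ≃ Fin n), ∀ i, ρ i = hM.eigenvalues (e i)

/-- Distance Laplacian energy, given the eigenvalue list `ρ`. -/
noncomputable def DLEnergy {n : ℕ} (G : SimpleGraph (Fin n)) (ρ : Fin n → ℝ) : ℝ :=
  ∑ i, |ρ i - 2 * wiener G / n|

/-- The graph has diameter two. -/
def diamTwo (G : SimpleGraph V) : Prop :=
  (∀ u v, G.dist u v ≤ 2) ∧ ∃ u v, G.dist u v = 2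

/-- The multiset of eigenvalues of a Hermitian matrix. -/
noncomputable def eigMultiset (M : Matrix V V ℝ) (hM : M.IsHermitian) : Multiset ℝ :=
  Finset.univ.val.map hM.eigenvalues

namespace Matrix.IsHermitian

variable {n 𝕜 : Type*} [RCLike 𝕜] [Fintype n] [DecidableEq n] {A B : Matrix n n 𝕜}

lemma eq_cfc_of_mulVec_eigenvectorBasis (hA : A.IsHermitian) {f : ℝ → ℝ}
    (h : ∀ j, B *ᵥ ⇑(hA.eigenvectorBasis j) = f (hA.eigenvalues j) • ⇑(hA.eigenvectorBasis j)) :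
    B = cfc f A := by
  let U : Matrix n n 𝕜 := hA.eigenvectorUnitary
  have hBU : B * U = U * diagonal (RCLike.ofReal ∘ f ∘ hA.eigenvalues) := by
    ext i j
    have := congrFun (h j) i
    simp only [mulVec, dotProduct, Pi.smul_apply, RCLike.real_smul_eq_coe_smul (K := 𝕜),
      smul_eq_mul] at this
    rw [mul_diagonal, mul_apply]
    simp [U, this, mul_comm]
  rw [cfc_eq hA, IsHermitian.cfc, Unitary.conjStarAlgAut_apply, ← hBU, mul_assoc,
    mem_unitaryGroup_iff.mp hA.eigenvectorUnitary.2, mul_one]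

open Polynomial in
lemma map_eigenvalues_of_eq_cfc (hA : A.IsHermitian) (hB : B.IsHermitian) {f : ℝ → ℝ}
    (h : B = cfc f A) : univ.val.map hB.eigenvalues = univ.val.map (f ∘ hA.eigenvalues) := by
  apply Multiset.map_injective (RCLike.ofReal_injective (K := 𝕜))
  rw [Multiset.map_map, Multiset.map_map, ← hB.roots_charpoly_eq_eigenvalues, h,
    hA.charpoly_cfc_eq, prod_eq_multiset_prod]
  have := roots_multiset_prod_X_sub_C
    (univ.val.map ((RCLike.ofReal : ℝ → 𝕜) ∘ f ∘ hA.eigenvalues))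
  rwa [Multiset.map_map] at this

end Matrix.IsHermitian

section

variable {G : SimpleGraph V} [DecidableRel G.Adj]

omit [Fintype V] in
lemma dist_eq_of_diamTwo (hconn : G.Connected) (hdiam : diamTwo G) (u v : V) :
    (G.dist u v : ℝ) = (if G.Adj u v then 1 else 0) + 2 * (if Gᶜ.Adj u v then 1 else 0) := by
  by_cases huv : u = v
  · simp [huv]
  by_cases hadj : G.Adj u v
  · simp [hadj, SimpleGraph.dist_eq_one_iff_adj.mpr hadj]
  have h0 : G.dist u v ≠ 0 := by simp [hconn.dist_eq_zero_iff, huv]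
  have h1 : G.dist u v ≠ 1 := fun h => hadj (SimpleGraph.dist_eq_one_iff_adj.mp h)
  have h2 : G.dist u v = 2 := by have := hdiam.1 u v; omega
  simp [hadj, huv, h2]

lemma transmission_eq_of_diamTwo (hconn : G.Connected) (hdiam : diamTwo G) (v : V) :
    (transmission G v : ℝ) = G.degree v + 2 * Gᶜ.degree v := by
  simp only [transmission, Nat.cast_sum, dist_eq_of_diamTwo hconn hdiam, sum_add_distrib,
    ← mul_sum, SimpleGraph.degree_eq_sum_if_adj]

lemma distLap_eq_lapMatrix_add_lapMatrix_compl (hconn : G.Connected) (hdiam : diamTwo G) :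
    distLap G = G.lapMatrix ℝ + (2 : ℝ) • Gᶜ.lapMatrix ℝ := by
  ext u v
  by_cases huv : u = v
  · subst huv
    simp [distLap, distMatrix, SimpleGraph.lapMatrix, SimpleGraph.degMatrix,
      transmission_eq_of_diamTwo hconn hdiam]
  · by_cases hadj : G.Adj u v <;>
      simp [distLap, distMatrix, SimpleGraph.lapMatrix, SimpleGraph.degMatrix, huv, hadj,
        dist_eq_of_diamTwo hconn hdiam]

lemma lapMatrix_add_lapMatrix_compl (R : Type*) [Ring R] :
    G.lapMatrix R + Gᶜ.lapMatrix R = (Fintype.card V : R) • 1 - of fun _ _ => 1 := by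
  ext u v
  by_cases huv : u = v
  · subst huv
    have hdeg : G.degree u + Gᶜ.degree u + 1 = Fintype.card V := by
      have := G.degree_lt_card_verts u
      rw [SimpleGraph.degree_compl]; omega
    simp only [SimpleGraph.lapMatrix, SimpleGraph.degMatrix, Matrix.add_apply, Matrix.sub_apply,
      diagonal_apply_eq, SimpleGraph.adjMatrix_apply, SimpleGraph.irrefl, Matrix.smul_apply,
      one_apply_eq, of_apply, if_false, sub_zero, smul_eq_mul, mul_one]
    rw [eq_sub_iff_add_eq, ← hdeg, Nat.cast_add, Nat.cast_add, Nat.cast_one]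
  · by_cases hadj : G.Adj u v <;> simp [SimpleGraph.lapMatrix, SimpleGraph.degMatrix, huv, hadj]

lemma sum_eq_zero_of_lapMatrix_mulVec_eq_smul {x : V → ℝ} {μ : ℝ} (hμ : μ ≠ 0)
    (hx : G.lapMatrix ℝ *ᵥ x = μ • x) : ∑ v, x v = 0 := by
  have h : μ * ∑ v, x v = 0 := by
    calc μ * ∑ v, x v = 1 ⬝ᵥ (G.lapMatrix ℝ *ᵥ x) := by
          simp [hx, one_dotProduct, mul_sum]
      _ = (G.lapMatrix ℝ *ᵥ 1) ⬝ᵥ x := by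
          rw [dotProduct_mulVec, ← vecMul_transpose, (G.isSymm_lapMatrix (R := ℝ)).eq]
      _ = 0 := by rw [Pi.one_def, G.lapMatrix_mulVec_const_eq_zero, zero_dotProduct]
  exact (mul_eq_zero.mp h).resolve_left hμ

lemma distLap_mulVec_eq_of_lapMatrix_mulVec_eq_smul (hconn : G.Connected) (hdiam : diamTwo G)
    {x : V → ℝ} {μ : ℝ} (hx : G.lapMatrix ℝ *ᵥ x = μ • x) :
    distLap G *ᵥ x = (if μ = 0 then 0 else 2 * Fintype.card V - μ) • x := by
  have hD : distLap G =
      (2 * Fintype.card V : ℝ) • 1 - (2 : ℝ) • (of fun _ _ => 1) - G.lapMatrix ℝ := by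
    rw [distLap_eq_lapMatrix_add_lapMatrix_compl hconn hdiam,
      eq_sub_of_add_eq' (lapMatrix_add_lapMatrix_compl ℝ)]
    module
  have hDx : ∀ v, (distLap G *ᵥ x) v = 2 * Fintype.card V * x v - 2 * ∑ u, x u - μ * x v := by
    intro v
    rw [hD, sub_mulVec, sub_mulVec, hx]
    simp [smul_mulVec, mulVec, dotProduct, mul_sum]
  ext v
  rw [hDx]
  split_ifs with hμ
  · subst hμ
    have hconst := (G.lapMatrix_mulVec_eq_zero_iff_forall_reachable).mp (by simpa using hx)
    simp only [fun u => hconst u v (hconn.preconnected u v), sum_const, card_univ, nsmul_eq_mul,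
      zero_mul, sub_zero, Pi.smul_apply, smul_eq_mul]
    ring
  · simp only [sum_eq_zero_of_lapMatrix_mulVec_eq_smul hμ hx, mul_zero, sub_zero, Pi.smul_apply,
      smul_eq_mul]
    ring

lemma distLap_eq_cfc_lapMatrix (hconn : G.Connected) (hdiam : diamTwo G) :
    distLap G =
      cfc (fun μ : ℝ => if μ = 0 then 0 else 2 * (Fintype.card V : ℝ) - μ) (G.lapMatrix ℝ) :=
  IsHermitian.eq_cfc_of_mulVec_eigenvectorBasis (G.isHermitian_lapMatrix ℝ) fun j =>
    distLap_mulVec_eq_of_lapMatrix_mulVec_eq_smul hconn hdiam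
      (IsHermitian.mulVec_eigenvectorBasis (G.isHermitian_lapMatrix ℝ) j)

lemma posSemidef_distLap_of_diamTwo (hconn : G.Connected) (hdiam : diamTwo G) :
    (distLap G).PosSemidef := by
  rw [distLap_eq_lapMatrix_add_lapMatrix_compl hconn hdiam]
  exact (G.posSemidef_lapMatrix ℝ).add ((Gᶜ.posSemidef_lapMatrix ℝ).smul zero_le_two)

lemma card_eigenvalues_lapMatrix_eq_zero (hconn : G.Connected)
    (hL : (G.lapMatrix ℝ).IsHermitian) : Fintype.card {i // hL.eigenvalues i = 0} = 1 := by
  have hcomp : Fintype.card G.ConnectedComponent = 1 := by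
    have := hconn.preconnected.subsingleton_connectedComponent
    exact Fintype.card_eq_one_iff.mpr
      ⟨G.connectedComponentMk hconn.nonempty.some, fun _ => Subsingleton.elim _ _⟩
  -- rank–nullity, with the nullity of `L` counting components and its rank nonzero eigenvalues
  have hnullity := LinearMap.finrank_range_add_finrank_ker (toLin' (G.lapMatrix ℝ))
  rw [G.card_connectedComponent_eq_finrank_ker_toLin'_lapMatrix, toLin'_apply'] at hcomp
  rw [toLin'_apply', ← rank, hL.rank_eq_card_non_zero_eigs, hcomp,
    Module.finrank_fintype_fun_eq_card] at hnullity
  have := Fintype.card_subtype_compl (fun i => hL.eigenvalues i = 0)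
  have := Fintype.card_subtype_le (fun i => hL.eigenvalues i = 0)
  simp only [ne_eq] at hnullity
  omega

end

lemma map_univ_val_eq_cons_last {α : Type*} {m : ℕ} (f : Fin (m + 1) → α) :
    univ.val.map f = f (Fin.last m) ::ₘ univ.val.map (fun i : Fin m => f i.castSucc) := by
  rw [Fin.univ_castSuccEmb, Finset.cons_val, Multiset.map_cons, map_val, Multiset.map_map]
  rfl

theorem eq_of_antitone_of_map_univ_val_eq {α : Type*} [LinearOrder α] {n : ℕ} {f g : Fin n → α}
    (hf : Antitone f) (hg : Antitone g) (h : univ.val.map f = univ.val.map g) : f = g := by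
  rw [Fin.univ_val_map, Fin.univ_val_map, Multiset.coe_eq_coe] at h
  exact List.ofFn_injective
    (h.eq_of_sortedGE (List.sortedGE_ofFn_iff.mpr hf) (List.sortedGE_ofFn_iff.mpr hg))

lemma apply_castSucc_eq_of_map_univ_val_eq_cons {α : Type*} [LinearOrder α] {m : ℕ}
    {ρ : Fin (m + 1) → α} {ν : Fin m → α} {a : α} (hρ : Antitone ρ) (hρa : ∀ i, a ≤ ρ i)
    (hν : Monotone ν) (h : univ.val.map ρ = a ::ₘ univ.val.map ν) (i : Fin m) :
    ρ i.castSucc = ν i.rev := by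
  have hνa : ∀ j, a ≤ ν j := by
    intro j
    have : ν j ∈ univ.val.map ρ := by
      rw [h]; exact Multiset.mem_cons_of_mem (Multiset.mem_map_of_mem _ (mem_univ j))
    obtain ⟨k, -, hk⟩ := Multiset.mem_map.mp this
    exact hk ▸ hρa k
  let t : Fin (m + 1) → α := Fin.snoc (fun j => ν j.rev) a
  have ht : Antitone t := by
    intro j k hjk
    induction k using Fin.lastCases with
    | last =>
      induction j using Fin.lastCases with
      | last => exact le_rfl
      | cast j => simpa [t] using hνa j.rev
    | cast k =>
      induction j using Fin.lastCases with
      | last => exact absurd hjk (not_le.mpr (Fin.castSucc_lt_last k))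
      | cast j => simpa [t] using hν (Fin.rev_le_rev.mpr (Fin.castSucc_le_castSucc_iff.mp hjk))
  have hmap : univ.val.map t = a ::ₘ univ.val.map ν := by
    rw [map_univ_val_eq_cons_last]
    simp only [t, Fin.snoc_castSucc, Fin.snoc_last]
    change a ::ₘ univ.val.map (ν ∘ Fin.revPerm) = _
    rw [← Multiset.map_map, Multiset.map_univ_val_equiv]
  rw [eq_of_antitone_of_map_univ_val_eq hρ ht (h.trans hmap.symm)]
  simp [t]

lemma IsSpectrum.map_univ_val_eq {n : ℕ} {M : Matrix (Fin n) (Fin n) ℝ} {ρ : Fin n → ℝ}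
    (h : IsSpectrum M ρ) (hM : M.IsHermitian) :
    univ.val.map ρ = univ.val.map hM.eigenvalues := by
  obtain ⟨_, _, e, he⟩ := h
  rw [funext he]
  change univ.val.map (hM.eigenvalues ∘ e) = _
  rw [← Multiset.map_map, Multiset.map_univ_val_equiv]

lemma IsSpectrum.nonneg {n : ℕ} {M : Matrix (Fin n) (Fin n) ℝ} {ρ : Fin n → ℝ}
    (h : IsSpectrum M ρ) (hM : M.PosSemidef) (i : Fin n) : 0 ≤ ρ i := by
  obtain ⟨_, _, e, he⟩ := h
  exact he i ▸ hM.eigenvalues_nonneg (e i)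

lemma IsSpectrum.lapMatrix_apply_eq_zero_iff {m : ℕ} {G : SimpleGraph (Fin (m + 1))}
    [DecidableRel G.Adj] (hconn : G.Connected) {μ : Fin (m + 1) → ℝ}
    (hμ : IsSpectrum (G.lapMatrix ℝ) μ) (i : Fin (m + 1)) : μ i = 0 ↔ i = Fin.last m := by
  have hnonneg := hμ.nonneg (G.posSemidef_lapMatrix ℝ)
  obtain ⟨hanti, hL, e, he⟩ := hμ
  have hcard : Fintype.card {j // μ j = 0} = 1 :=
    (Fintype.card_congr (e.subtypeEquiv fun j => by rw [he])).trans
      (card_eigenvalues_lapMatrix_eq_zero hconn hL)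
  obtain ⟨⟨k, hk⟩, hunique⟩ := Fintype.card_eq_one_iff.mp hcard
  have hlast : μ (Fin.last m) = 0 := le_antisymm (hk ▸ hanti (Fin.le_last k)) (hnonneg _)
  constructor
  · intro hi
    exact congrArg Subtype.val ((hunique ⟨i, hi⟩).trans (hunique ⟨_, hlast⟩).symm)
  · rintro rfl
    exact hlast

theorem stmt0 {n : ℕ} (G : SimpleGraph (Fin n)) [DecidableRel G.Adj]
    (hconn : G.Connected) (hdiam : diamTwo G)
    (ρ μ : Fin n → ℝ)
    (hρ : IsSpectrum (distLap G) ρ) (hμ : IsSpectrum (G.lapMatrix ℝ) μ) :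
    ∀ i : Fin n, (i : ℕ) < n - 1 →
      ρ i = 2 * (n : ℝ) - μ ⟨n - 2 - (i : ℕ), by omega⟩ := by
  intro i hi
  obtain ⟨m, rfl⟩ : ∃ m, n = m + 1 := ⟨n - 1, by omega⟩
  have hD := posSemidef_distLap_of_diamTwo hconn hdiam
  have hL := G.isHermitian_lapMatrix ℝ
  set ν : Fin m → ℝ := fun j => 2 * ((m + 1 : ℕ) : ℝ) - μ j.castSucc
  have hspec : univ.val.map ρ = 0 ::ₘ univ.val.map ν := by
    rw [hρ.map_univ_val_eq hD.1,
      IsHermitian.map_eigenvalues_of_eq_cfc hL hD.1 (distLap_eq_cfc_lapMatrix hconn hdiam),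
      ← Multiset.map_map, ← hμ.map_univ_val_eq hL, map_univ_val_eq_cons_last, Multiset.map_cons,
      Multiset.map_map]
    simp [ν, hμ.lapMatrix_apply_eq_zero_iff hconn]
  have hν : Monotone ν := fun j k hjk =>
    sub_le_sub_left (hμ.1 (Fin.castSucc_le_castSucc_iff.mpr hjk)) _
  have hidx : (⟨m + 1 - 2 - i, by omega⟩ : Fin (m + 1)) =
      (Fin.rev ⟨i, by omega⟩ : Fin m).castSucc :=
    Fin.ext (by simp only [Fin.val_castSucc, Fin.val_rev]; omega)
  rw [hidx]
  exact apply_castSucc_eq_of_map_univ_val_eq_cons hρ.1 (hρ.nonneg hD) hν hspec ⟨i, by omega⟩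
end

section
/- For a connected graph G of order n ≥ 3 and size m with diameter 2, the distance Laplacian energy satisfies DLE(G) = 2(σ(2m/n + 2) − 2m + S_{n−σ−1}(G)), where S_k(G) is the sum of the k largest Laplacian eigenvalues of G and σ (with 1 ≤ σ ≤ n−2) is the number of distance Laplacian eigenvalues of G that are ≥ 2W(G)/n. -/
open Finset Matrix BigOperators

variable {V : Type*} [Fintype V] [DecidableEq V]

/-!
For a graph of diameter two the distance Laplacian is `2n I - 2J - L`. An eigenvector of `L` with
eigenvalue `μ ≠ 0` sums to zero, so it is an eigenvector of `D^L` with eigenvalue `2n - μ`, while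
the constant vectors span the kernel of both. Hence the eigenvalues of `D^L`, in nonincreasing
order, are `2n - μ_{n-1}, …, 2n - μ_1, 0` (the last step down because `D^L` is positive
semidefinite). They sum to `2W`, so the energy is twice the excess of the `σ` eigenvalues above
the mean `2W/n`; substituting them, `∑ μ_i = 2m` and `W = n(n-1) - m` gives the formula.
-/

open Polynomial in
theorem Matrix.charpoly_eq_prod_of_mulVec_eigenvectorBasis {ι 𝕜 : Type*} [RCLike 𝕜] [Fintype ι]
    [DecidableEq ι] {A B : Matrix ι ι 𝕜} (hB : B.IsHermitian) (d : ι → 𝕜)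
    (h : ∀ j, A *ᵥ ⇑(hB.eigenvectorBasis j) = d j • ⇑(hB.eigenvectorBasis j)) :
    A.charpoly = ∏ j, (X - C (d j)) := by
  set U : Matrix ι ι 𝕜 := (hB.eigenvectorUnitary : Matrix ι ι 𝕜)
  have hAU : A * U = U * diagonal d := by
    ext i j
    rw [mul_diagonal]
    simpa [U, mul_apply, mulVec, dotProduct, mul_comm] using congrFun (h j) i
  have hUU : star U * U = 1 := Unitary.coe_star_mul_self _
  have hUU' : U * star U = 1 := Unitary.coe_mul_star_self _
  have hA : A = U * (diagonal d * star U) := by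
    rw [← Matrix.mul_assoc, ← hAU, Matrix.mul_assoc, hUU', Matrix.mul_one]
  rw [hA, charpoly_mul_comm, Matrix.mul_assoc, hUU, Matrix.mul_one, charpoly_diagonal]

theorem Matrix.IsHermitian.eigMultiset_eq_of_mulVec_eigenvectorBasis {ι : Type*} [Fintype ι]
    [DecidableEq ι] {A B : Matrix ι ι ℝ} (hA : A.IsHermitian) (hB : B.IsHermitian) (d : ι → ℝ)
    (h : ∀ j, A *ᵥ ⇑(hB.eigenvectorBasis j) = d j • ⇑(hB.eigenvectorBasis j)) :
    eigMultiset A hA = univ.val.map d := by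
  have hroots := hA.roots_charpoly_eq_eigenvalues
  rw [charpoly_eq_prod_of_mulVec_eigenvectorBasis hB d h, Polynomial.roots_prod _ _
    (prod_ne_zero_iff.mpr fun j _ => Polynomial.X_sub_C_ne_zero (d j))] at hroots
  simpa [eigMultiset] using hroots.symm

theorem Antitone.eq_of_map_univ_eq {α : Type*} [PartialOrder α] {n : ℕ} {f g : Fin n → α}
    (hf : Antitone f) (hg : Antitone g) (h : univ.val.map f = univ.val.map g) : f = g :=
  List.ofFn_injective <| List.Perm.eq_of_sortedGE hf.sortedGE_ofFn hg.sortedGE_ofFn <|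
    Multiset.coe_eq_coe.mp (by simpa using h)

theorem sum_abs_sub_eq_two_mul_sum_filter {ι : Type*} (s : Finset ι) (x : ι → ℝ) {c : ℝ}
    (h : ∑ i ∈ s, x i = #s * c) : ∑ i ∈ s, |x i - c| = 2 * ∑ i ∈ s with c ≤ x i, (x i - c) := by
  have h0 : ∑ i ∈ s, (x i - c) = 0 := by
    rw [sum_sub_distrib, h, sum_const, nsmul_eq_mul, sub_self]
  rw [← sum_filter_add_sum_filter_not s (fun i => c ≤ x i)] at h0 ⊢
  rw [sum_congr rfl fun i hi => abs_of_nonneg (sub_nonneg.mpr (mem_filter.mp hi).2),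
    sum_congr rfl fun i hi => abs_of_neg (sub_neg.mpr (not_le.mp (mem_filter.mp hi).2)),
    sum_neg_distrib]
  linarith

theorem Fin.sum_univ_eq_sum_filter_lt_add_sum_reflect {M : Type*} [AddCommMonoid M] {n a : ℕ}
    (ha : a < n) (f : Fin n → M) :
    ∑ i, f i = ∑ i ∈ univ.filter (fun i : Fin n => (i : ℕ) < n - a - 1), f i
      + ∑ i ∈ univ.filter (fun i : Fin n => (i : ℕ) < a), f ⟨n - 2 - i, by omega⟩
      + f ⟨n - 1, by omega⟩ := by
  have hreflect : ∑ i ∈ univ.filter (fun i : Fin n => (i : ℕ) < a), f ⟨n - 2 - i, by omega⟩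
      = ∑ i ∈ univ.filter (fun i : Fin n => n - a - 1 ≤ (i : ℕ) ∧ (i : ℕ) < n - 1), f i := by
    refine sum_nbij' (fun i => ⟨n - 2 - i, by omega⟩) (fun i => ⟨n - 2 - i, by omega⟩)
      ?_ ?_ ?_ ?_ ?_ <;> intro i <;> simp [Fin.ext_iff] <;> omega
  have hinit : (univ.filter fun i : Fin n => (i : ℕ) < n - 1).filter
      (fun i : Fin n => (i : ℕ) < n - a - 1)
      = univ.filter fun i : Fin n => (i : ℕ) < n - a - 1 := by
    ext i; simp; omega
  have hmid : (univ.filter fun i : Fin n => (i : ℕ) < n - 1).filter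
      (fun i : Fin n => ¬ (i : ℕ) < n - a - 1)
      = univ.filter fun i : Fin n => n - a - 1 ≤ (i : ℕ) ∧ (i : ℕ) < n - 1 := by
    ext i; simp; omega
  have hlast : (univ.filter fun i : Fin n => ¬ (i : ℕ) < n - 1) = {⟨n - 1, by omega⟩} := by
    ext i; simp [Fin.ext_iff]; omega
  rw [hreflect, ← sum_filter_add_sum_filter_not univ (fun i : Fin n => (i : ℕ) < n - 1),
    ← sum_filter_add_sum_filter_not _ (fun i : Fin n => (i : ℕ) < n - a - 1), hinit, hmid, hlast,
    sum_singleton]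

theorem Fin.val_rev_finRotate_of_lt {k : ℕ} (j : Fin (k + 1)) (hj : (j : ℕ) < k) :
    (Fin.rev (finRotate (k + 1) j) : ℕ) = k - 1 - j := by
  rw [Fin.val_rev, finRotate_apply, Fin.val_add_one_of_lt (show j < Fin.last k from hj)]
  omega

theorem SimpleGraph.dist_eq_ite_adj_of_diam_le_two {U : Type*} {G : SimpleGraph U}
    [DecidableRel G.Adj] (hconn : G.Connected) (hdiam : ∀ u v, G.dist u v ≤ 2) {u v : U}
    (huv : u ≠ v) : G.dist u v = if G.Adj u v then 1 else 2 := by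
  have hpos := hconn.pos_dist_of_ne huv
  split_ifs with hadj
  · exact SimpleGraph.dist_eq_one_iff_adj.mpr hadj
  · have := mt SimpleGraph.dist_eq_one_iff_adj.mp hadj
    have := hdiam u v
    omega

section DistanceLaplacian

theorem distLap_mulVec_apply (G : SimpleGraph V) (x : V → ℝ) (u : V) :
    (distLap G *ᵥ x) u = ∑ v, (G.dist u v : ℝ) * (x u - x v) := by
  have hD : (distMatrix G *ᵥ x) u = ∑ v, (G.dist u v : ℝ) * x v := rfl
  rw [distLap, sub_mulVec, Pi.sub_apply, mulVec_diagonal, hD, transmission, Nat.cast_sum,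
    sum_mul, ← sum_sub_distrib]
  simp only [mul_sub]

theorem two_mul_dotProduct_distLap_mulVec (G : SimpleGraph V) (x : V → ℝ) :
    2 * (x ⬝ᵥ (distLap G *ᵥ x)) = ∑ u, ∑ v, (G.dist u v : ℝ) * (x u - x v) ^ 2 := by
  have hQ : x ⬝ᵥ (distLap G *ᵥ x) = ∑ u, ∑ v, (G.dist u v : ℝ) * (x u * (x u - x v)) := by
    simp only [dotProduct, distLap_mulVec_apply, mul_sum]
    exact sum_congr rfl fun u _ => sum_congr rfl fun v _ => by ring
  have hswap : ∑ u, ∑ v, (G.dist u v : ℝ) * (x u * (x u - x v))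
      = ∑ u, ∑ v, (G.dist u v : ℝ) * (x v * (x v - x u)) := by
    rw [sum_comm]
    simp_rw [SimpleGraph.dist_comm]
  rw [two_mul, hQ]
  nth_rewrite 2 [hswap]
  simp only [← sum_add_distrib]
  exact sum_congr rfl fun u _ => sum_congr rfl fun v _ => by ring

theorem distLap_isHermitian (G : SimpleGraph V) : (distLap G).IsHermitian := by
  refine IsHermitian.ext fun u v => ?_
  by_cases huv : u = v
  · simp [huv]
  · simp [distLap, distMatrix, huv, Ne.symm huv, SimpleGraph.dist_comm]

theorem posSemidef_distLap (G : SimpleGraph V) : (distLap G).PosSemidef := by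
  refine .of_dotProduct_mulVec_nonneg (distLap_isHermitian G) fun x => ?_
  have hQ := two_mul_dotProduct_distLap_mulVec G x
  have : 0 ≤ ∑ u, ∑ v, (G.dist u v : ℝ) * (x u - x v) ^ 2 := by positivity
  rw [star_trivial]
  linarith

theorem trace_distLap (G : SimpleGraph V) : (distLap G).trace = 2 * wiener G := by
  simp [trace, distLap, distMatrix, wiener]
  ring

variable {G : SimpleGraph V} [DecidableRel G.Adj]

theorem transmission_eq_of_diam_le_two (hconn : G.Connected) (hdiam : ∀ u v, G.dist u v ≤ 2)
    (v : V) : (transmission G v : ℝ) = 2 * Fintype.card V - 2 - G.degree v := by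
  have hdist : ∀ u, (G.dist v u : ℝ)
      = 2 - (if v = u then 2 else 0) - (if G.Adj v u then 1 else 0) := by
    intro u
    by_cases huv : v = u
    · simp [huv]
    · rw [G.dist_eq_ite_adj_of_diam_le_two hconn hdiam huv]
      split_ifs <;> norm_num
  simp only [transmission, Nat.cast_sum, hdist, sum_sub_distrib, sum_const, card_univ,
    sum_ite_eq, mem_univ, if_true, nsmul_eq_mul, ← SimpleGraph.degree_eq_sum_if_adj]
  ring

theorem wiener_eq_of_diam_le_two (hconn : G.Connected) (hdiam : ∀ u v, G.dist u v ≤ 2) :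
    wiener G = Fintype.card V * (Fintype.card V - 1) - #G.edgeFinset := by
  have hdeg : ∑ v, (G.degree v : ℝ) = 2 * #G.edgeFinset := by
    exact_mod_cast G.sum_degrees_eq_twice_card_edges
  simp only [wiener, transmission_eq_of_diam_le_two hconn hdiam, sum_sub_distrib, hdeg,
    sum_const, card_univ, nsmul_eq_mul]
  ring

theorem distLap_eq_of_diam_le_two (hconn : G.Connected) (hdiam : ∀ u v, G.dist u v ≤ 2) :
    distLap G = (2 * Fintype.card V : ℝ) • (1 : Matrix V V ℝ)
      - (2 : ℝ) • Matrix.of (fun _ _ => 1) - G.lapMatrix ℝ := by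
  ext u v
  by_cases huv : u = v
  · subst huv
    simp [distLap, distMatrix, SimpleGraph.lapMatrix, SimpleGraph.degMatrix,
      transmission_eq_of_diam_le_two hconn hdiam]
  · simp [distLap, distMatrix, SimpleGraph.lapMatrix, SimpleGraph.degMatrix, huv,
      G.dist_eq_ite_adj_of_diam_le_two hconn hdiam huv]
    split_ifs <;> norm_num

end DistanceLaplacian

namespace SimpleGraph

variable {G : SimpleGraph V} [DecidableRel G.Adj]

theorem trace_lapMatrix : (G.lapMatrix ℝ).trace = 2 * #G.edgeFinset := by
  simp [trace, lapMatrix, degMatrix]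
  exact_mod_cast G.sum_degrees_eq_twice_card_edges

variable (hL : (G.lapMatrix ℝ).IsHermitian)

theorem sum_eigenvectorBasis_lapMatrix_eq_zero {j : V} (hj : hL.eigenvalues j ≠ 0) :
    ∑ v, hL.eigenvectorBasis j v = 0 := by
  have h : (fun _ => (1 : ℝ)) ⬝ᵥ (G.lapMatrix ℝ *ᵥ ⇑(hL.eigenvectorBasis j))
      = hL.eigenvalues j * ∑ v, hL.eigenvectorBasis j v := by
    simp [hL.mulVec_eigenvectorBasis, dotProduct, mul_sum]
  rw [dotProduct_mulVec, ← mulVec_transpose, (isSymm_lapMatrix ℝ G).eq,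
    lapMatrix_mulVec_const_eq_zero, zero_dotProduct] at h
  exact (mul_eq_zero.mp h.symm).resolve_left hj

theorem eigenvectorBasis_lapMatrix_apply_eq (hconn : G.Connected) {j : V}
    (hj : hL.eigenvalues j = 0) (u v : V) :
    hL.eigenvectorBasis j u = hL.eigenvectorBasis j v := by
  have h := hL.mulVec_eigenvectorBasis j
  rw [hj, zero_smul] at h
  exact (lapMatrix_mulVec_eq_zero_iff_forall_reachable G).mp h u v (hconn.preconnected u v)

theorem card_eigenvalues_lapMatrix_ne_zero (hconn : G.Connected) :
    Fintype.card {i // hL.eigenvalues i ≠ 0} = Fintype.card V - 1 := by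
  have hcc : Fintype.card G.ConnectedComponent = 1 :=
    Fintype.card_eq_one_iff.mpr ⟨G.connectedComponentMk hconn.nonempty.some,
      fun _ => hconn.preconnected.subsingleton_connectedComponent.elim _ _⟩
  have hrank := LinearMap.finrank_range_add_finrank_ker (G.lapMatrix ℝ).mulVecLin
  rw [Module.finrank_fintype_fun_eq_card, ← Matrix.toLin'_apply',
    ← card_connectedComponent_eq_finrank_ker_toLin'_lapMatrix, hcc, Matrix.toLin'_apply']
    at hrank
  rw [← hL.rank_eq_card_non_zero_eigs, rank]
  omega

end SimpleGraph

theorem distLap_mulVec_eigenvectorBasis_lapMatrix {G : SimpleGraph V} [DecidableRel G.Adj]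
    (hL : (G.lapMatrix ℝ).IsHermitian) (hconn : G.Connected) (hdiam : ∀ u v, G.dist u v ≤ 2)
    (j : V) : distLap G *ᵥ ⇑(hL.eigenvectorBasis j)
      = (if hL.eigenvalues j = 0 then 0 else 2 * Fintype.card V - hL.eigenvalues j)
        • ⇑(hL.eigenvectorBasis j) := by
  ext u
  have hJ : (Matrix.of (fun _ _ => (1 : ℝ)) *ᵥ ⇑(hL.eigenvectorBasis j)) u
      = ∑ v, hL.eigenvectorBasis j v := by
    simp [mulVec, dotProduct]
  simp only [distLap_eq_of_diam_le_two hconn hdiam, sub_mulVec, smul_mulVec, one_mulVec,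
    hL.mulVec_eigenvectorBasis, Pi.sub_apply, Pi.smul_apply, smul_eq_mul, hJ]
  split_ifs with hj
  · simp only [G.eigenvectorBasis_lapMatrix_apply_eq hL hconn hj _ u, sum_const, card_univ,
      nsmul_eq_mul, hj]
    ring
  · rw [G.sum_eigenvectorBasis_lapMatrix_eq_zero hL hj]
    ring

namespace IsSpectrum

variable {n : ℕ} {G : SimpleGraph (Fin n)} [DecidableRel G.Adj] {ρ μ : Fin n → ℝ}

theorem map_univ_eq {M : Matrix (Fin n) (Fin n) ℝ} (h : IsSpectrum M ρ) (hM : M.IsHermitian) :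
    univ.val.map ρ = eigMultiset M hM := by
  obtain ⟨-, hM', e, he⟩ := h
  rw [show ρ = hM.eigenvalues ∘ e from funext he, ← Multiset.map_map, Multiset.map_univ_val_equiv]
  rfl

theorem sum_eq_trace {M : Matrix (Fin n) (Fin n) ℝ} (h : IsSpectrum M ρ) : ∑ i, ρ i = M.trace := by
  obtain ⟨-, hM, -⟩ := id h
  rw [hM.trace_eq_sum_eigenvalues]
  simpa only [eigMultiset, sum_eq_multiset_sum, RCLike.ofReal_real_eq_id, id_eq]
    using congrArg Multiset.sum (h.map_univ_eq hM)

theorem nonneg_s2 {M : Matrix (Fin n) (Fin n) ℝ} (hM : M.PosSemidef) (h : IsSpectrum M ρ)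
    (i : Fin n) : 0 ≤ ρ i := by
  obtain ⟨-, hM', e, he⟩ := h
  exact he i ▸ hM.eigenvalues_nonneg (e i)

theorem lapMatrix_pos_iff (hconn : G.Connected) (hμ : IsSpectrum (G.lapMatrix ℝ) μ)
    (j : Fin n) : 0 < μ j ↔ (j : ℕ) < n - 1 := by
  have hnonneg := hμ.nonneg_s2 (G.posSemidef_lapMatrix ℝ)
  obtain ⟨hanti, hL, e, he⟩ := hμ
  have hcard : #{i | 0 < μ i} = n - 1 := calc
    _ = Fintype.card {i // hL.eigenvalues i ≠ 0} := by
      rw [← Fintype.card_subtype]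
      exact Fintype.card_congr (e.subtypeEquiv fun i => by rw [← he, (hnonneg i).lt_iff_ne'])
    _ = n - 1 := by rw [G.card_eigenvalues_lapMatrix_ne_zero hL hconn, Fintype.card_fin]
  rw [← Tuple.lt_card_gt_iff_apply_gt_of_antitone hanti, hcard]

theorem lapMatrix_apply_eq_zero (hconn : G.Connected) (hμ : IsSpectrum (G.lapMatrix ℝ) μ)
    (j : Fin n) (hj : n - 1 ≤ (j : ℕ)) : μ j = 0 :=
  le_antisymm (not_lt.mp fun h => by have := (hμ.lapMatrix_pos_iff hconn j).mp h; omega)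
    (hμ.nonneg_s2 (G.posSemidef_lapMatrix ℝ) j)

theorem map_univ_distLap_of_diam_le_two (hconn : G.Connected) (hdiam : ∀ u v, G.dist u v ≤ 2)
    (hρ : IsSpectrum (distLap G) ρ) (hμ : IsSpectrum (G.lapMatrix ℝ) μ) :
    univ.val.map ρ = univ.val.map (fun j => if μ j = 0 then 0 else 2 * n - μ j) := by
  obtain ⟨-, hD, -⟩ := id hρ
  obtain ⟨-, hL, e, he⟩ := id hμ
  have hDL := hD.eigMultiset_eq_of_mulVec_eigenvectorBasis hL _
    (distLap_mulVec_eigenvectorBasis_lapMatrix hL hconn hdiam)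
  rw [hρ.map_univ_eq hD, hDL, ← Multiset.map_univ_val_equiv e, Multiset.map_map]
  simp [he]

theorem distLap_apply_of_diam_le_two (hconn : G.Connected) (hdiam : ∀ u v, G.dist u v ≤ 2)
    (hρ : IsSpectrum (distLap G) ρ) (hμ : IsSpectrum (G.lapMatrix ℝ) μ) (i : Fin n)
    (hi : (i : ℕ) < n - 1) : ρ i = 2 * n - μ ⟨n - 2 - i, by omega⟩ := by
  obtain ⟨k, rfl⟩ : ∃ k, n = k + 1 := ⟨n - 1, by omega⟩
  set r : Equiv.Perm (Fin (k + 1)) := (finRotate (k + 1)).trans Fin.revPerm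
  have hr : ∀ j : Fin (k + 1), (j : ℕ) < k → (r j : ℕ) = k - 1 - j :=
    Fin.val_rev_finRotate_of_lt
  have hr_last : r (Fin.last k) = Fin.last k := by simp [r]
  -- `ρ'` lists the spectrum of `distLap G` in nonincreasing order, so it must be `ρ`.
  set ρ' : Fin (k + 1) → ℝ := fun j => if μ (r j) = 0 then 0 else 2 * ↑(k + 1) - μ (r j)
  have hmap : univ.val.map ρ = univ.val.map ρ' := by
    rw [hρ.map_univ_distLap_of_diam_le_two hconn hdiam hμ, ← Multiset.map_univ_val_equiv r,
      Multiset.map_map, Multiset.map_univ_val_equiv]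
    rfl
  have hρ'_nonneg : ∀ j, 0 ≤ ρ' j := fun j => by
    obtain ⟨i, -, hi⟩ := Multiset.mem_map.mp (hmap ▸ Multiset.mem_map_of_mem ρ' (mem_univ_val j))
    exact hi ▸ hρ.nonneg_s2 (posSemidef_distLap G) i
  have hρ'_lt : ∀ j : Fin (k + 1), (j : ℕ) < k → ρ' j = 2 * ↑(k + 1) - μ (r j) := by
    intro j hj
    have : 0 < μ (r j) := (hμ.lapMatrix_pos_iff hconn _).mpr (by rw [hr j hj]; omega)
    simp [ρ', this.ne']
  have hρ'_last : ρ' (Fin.last k) = 0 := by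
    simp [ρ', hr_last, hμ.lapMatrix_apply_eq_zero hconn (Fin.last k) (by simp)]
  have hanti : Antitone ρ' := by
    intro a b hab
    rcases (Fin.le_last b).lt_or_eq with hb | rfl
    · have hb' : (b : ℕ) < k := hb
      have ha' : (a : ℕ) < k := lt_of_le_of_lt hab hb'
      rw [hρ'_lt a ha', hρ'_lt b hb']
      have : r b ≤ r a := by rw [Fin.le_def, hr a ha', hr b hb']; omega
      linarith [hμ.1 this]
    · rw [hρ'_last]; exact hρ'_nonneg a
  rw [hρ.1.eq_of_map_univ_eq hanti hmap, hρ'_lt i hi,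
    show r i = ⟨k + 1 - 2 - i, by omega⟩ from Fin.ext ((hr i hi).trans (by dsimp only; omega))]

end IsSpectrum

theorem stmt2_general {n : ℕ} (G : SimpleGraph (Fin n)) [DecidableRel G.Adj]
    (hconn : G.Connected) (hdiam : diamTwo G)
    (m : ℕ) (hm : m = G.edgeFinset.card)
    (ρ μ : Fin n → ℝ)
    (hρ : IsSpectrum (distLap G) ρ) (hμ : IsSpectrum (G.lapMatrix ℝ) μ)
    (σ : ℕ) (hσ : σ = (Finset.univ.filter (fun i => 2 * wiener G / n ≤ ρ i)).card)
    (hσ2 : σ ≤ n - 2) :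
    DLEnergy G ρ =
      2 * ((σ : ℝ) * (2 * (m : ℝ) / n + 2) - 2 * (m : ℝ) +
        ∑ i ∈ Finset.univ.filter (fun i : Fin n => (i : ℕ) < n - σ - 1), μ i) := by
  set c := 2 * wiener G / n with hc_def
  have hn0 : 0 < n := Fin.pos_iff_nonempty.mpr hconn.nonempty
  have hsumρ : ∑ i, ρ i = #(univ : Finset (Fin n)) * c := by
    rw [hρ.sum_eq_trace, trace_distLap, card_univ, Fintype.card_fin, hc_def]
    field_simp
  have htop : univ.filter (fun i => c ≤ ρ i) = univ.filter (fun i : Fin n => (i : ℕ) < σ) := by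
    ext i
    simp [hσ, Tuple.lt_card_ge_iff_apply_ge_of_antitone hρ.1]
  have hρtop : ∀ i ∈ univ.filter (fun i : Fin n => (i : ℕ) < σ),
      ρ i - c = 2 * n - c - μ ⟨n - 2 - i, by omega⟩ := fun i hi => by
    rw [hρ.distLap_apply_of_diam_le_two hconn hdiam.1 hμ i (by simp at hi; omega)]
    ring
  have hμsplit := Fin.sum_univ_eq_sum_filter_lt_add_sum_reflect (show σ < n by omega) μ
  rw [hμ.sum_eq_trace, SimpleGraph.trace_lapMatrix, ← hm,
    hμ.lapMatrix_apply_eq_zero hconn _ le_rfl, add_zero] at hμsplit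
  have hc : c = 2 * (n - 1) - 2 * m / n := by
    rw [hc_def, wiener_eq_of_diam_le_two hconn hdiam.1, Fintype.card_fin, ← hm]
    field_simp
  rw [DLEnergy, sum_abs_sub_eq_two_mul_sum_filter _ _ hsumρ, htop, sum_congr rfl hρtop,
    sum_sub_distrib, sum_const, Fin.card_filter_val_lt, min_eq_right (by omega), nsmul_eq_mul, hc]
  linarith

theorem stmt2 {n : ℕ} (hn : 3 ≤ n) (G : SimpleGraph (Fin n)) [DecidableRel G.Adj]
    (hconn : G.Connected) (hdiam : diamTwo G)
    (m : ℕ) (hm : m = G.edgeFinset.card)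
    (ρ μ : Fin n → ℝ)
    (hρ : IsSpectrum (distLap G) ρ) (hμ : IsSpectrum (G.lapMatrix ℝ) μ)
    (σ : ℕ) (hσ : σ = (Finset.univ.filter (fun i => 2 * wiener G / n ≤ ρ i)).card)
    (hσ1 : 1 ≤ σ) (hσ2 : σ ≤ n - 2) :
    DLEnergy G ρ =
      2 * ((σ : ℝ) * (2 * (m : ℝ) / n + 2) - 2 * (m : ℝ) +
        ∑ i ∈ Finset.univ.filter (fun i : Fin n => (i : ℕ) < n - σ - 1), μ i) :=
  stmt2_general G hconn hdiam m hm ρ μ hρ hμ σ hσ hσ2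
end

section
/- Let G be a connected graph of order n ≥ 3 and size m with diameter 2, σ the number of distance Laplacian eigenvalues strictly greater than 2W(G)/n and t the number of Laplacian eigenvalues strictly greater than 2m/n. Then σ ≥ n − (t+1). -/
open Finset Matrix BigOperators

variable {V : Type*} [Fintype V] [DecidableEq V]

/-! For a connected graph of diameter two, `dist u v = 2 - 2 [u = v] - [u ~ v]`, so
`D^L = 2n I - 2J - L` with `J` the all-ones matrix. The kernel of `L` is spanned by the all-ones
vector and every other eigenvector of `L` is orthogonal to it, hence killed by `J`. So an
orthonormal eigenbasis of `L` also diagonalises `D^L`, with eigenvalue `0` on the kernel and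
`2n - μ` on an eigenvector for `μ ≠ 0`. As `W = n² - n - m`, we have `2W/n = 2n - 2 - 2m/n`, so each
of the at least `n - t - 1` nonzero Laplacian eigenvalues `μ ≤ 2m/n` gives a distance Laplacian
eigenvalue `2n - μ > 2W/n`. -/

theorem Fintype.card_sub_le_card_filter_of_forall_or {ι : Type*} [Fintype ι] [DecidableEq ι]
    {p q r : ι → Prop} [DecidablePred p] [DecidablePred q] [DecidablePred r] (hq : #{i | q i} ≤ 1)
    (h : ∀ i, p i ∨ q i ∨ r i) : Fintype.card ι - (#{i | p i} + 1) ≤ #{i | r i} := by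
  have hsub : univ.filter (fun i => ¬ p i) ⊆
      univ.filter (fun i => q i) ∪ univ.filter (fun i => r i) := fun i => by
    simpa using (h i).resolve_left
  have hle := (card_le_card hsub).trans (card_union_le _ _)
  have hsplit := card_filter_add_card_filter_not (s := univ) fun i => p i
  rw [card_univ] at hsplit
  omega

theorem card_filter_comp_eq_of_map_eq {ι α : Type*} [Fintype ι] {f g : ι → α}
    (h : univ.val.map f = univ.val.map g) (p : α → Prop) [DecidablePred p] :
    #{i | p (f i)} = #{i | p (g i)} := by
  have hcount (f : ι → α) : #{i | p (f i)} = (univ.val.map f).countP p := by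
    rw [Multiset.countP_map]
    rfl
  rw [hcount, hcount, h]

theorem IsSpectrum.card_filter_eq {n : ℕ} {M : Matrix (Fin n) (Fin n) ℝ} {ρ : Fin n → ℝ}
    (h : IsSpectrum M ρ) (hM : M.IsHermitian) (p : ℝ → Prop) [DecidablePred p] :
    #{i | p (ρ i)} = #{i | p (hM.eigenvalues i)} := by
  obtain ⟨-, hM', e, he⟩ := h
  simp only [card_filter, he]
  exact e.sum_comp fun j => if p (hM.eigenvalues j) then 1 else 0

theorem Matrix.IsHermitian.map_eigenvalues_eq_of_orthonormalBasis {ι 𝕜 : Type*} [Fintype ι]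
    [DecidableEq ι] [RCLike 𝕜] {M : Matrix ι ι 𝕜} (hM : M.IsHermitian)
    (b : OrthonormalBasis ι 𝕜 (EuclideanSpace 𝕜 ι)) (g : ι → ℝ)
    (hb : ∀ i, M *ᵥ b i = (g i : 𝕜) • b i) :
    univ.val.map hM.eigenvalues = univ.val.map g := by
  set U := (EuclideanSpace.basisFun ι 𝕜).toBasis.toMatrix b.toBasis
  have hU : U ∈ unitaryGroup ι 𝕜 :=
    (EuclideanSpace.basisFun ι 𝕜).toMatrix_orthonormalBasis_mem_unitary b
  have hMU : M * U = U * diagonal (fun i => (g i : 𝕜)) := by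
    ext v i
    rw [mul_diagonal, mul_comm]
    exact congrFun (hb i) v
  have hcharpoly : M.charpoly = (diagonal fun i => (g i : 𝕜)).charpoly := by
    rw [← mul_one M, ← mem_unitaryGroup_iff.mp hU, ← mul_assoc, hMU, mul_assoc,
      charpoly_mul_comm, mul_assoc, mem_unitaryGroup_iff'.mp hU, mul_one]
  apply Multiset.map_injective (RCLike.ofReal_injective (K := 𝕜))
  rw [Multiset.map_map, ← hM.roots_charpoly_eq_eigenvalues, hcharpoly, charpoly_diagonal,
    Polynomial.roots_prod _ _ (prod_ne_zero_iff.mpr fun i _ => Polynomial.X_sub_C_ne_zero _)]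
  simp

namespace SimpleGraph

theorem sum_eq_zero_of_lapMatrix_mulVec_eq_smul (G : SimpleGraph V) [DecidableRel G.Adj]
    {R : Type*} [Field R] {x : V → R} {c : R} (hc : c ≠ 0) (hx : G.lapMatrix R *ᵥ x = c • x) :
    ∑ v, x v = 0 := by
  have : c * ∑ v, x v = 0 :=
    calc c * ∑ v, x v = (fun _ => 1) ⬝ᵥ (G.lapMatrix R *ᵥ x) := by
          simp [hx, dotProduct, mul_sum]
      _ = (G.lapMatrix R *ᵥ fun _ => 1) ⬝ᵥ x := by
          rw [dotProduct_mulVec, ← vecMul_transpose, (isSymm_lapMatrix R G).eq]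
      _ = 0 := by rw [lapMatrix_mulVec_const_eq_zero, zero_dotProduct]
  exact (mul_eq_zero.mp this).resolve_left hc

theorem card_filter_eigenvalues_lapMatrix_eq_zero (G : SimpleGraph V) [DecidableRel G.Adj]
    (hL : (G.lapMatrix ℝ).IsHermitian) :
    #{i | hL.eigenvalues i = 0} = Fintype.card G.ConnectedComponent := by
  have hsplit := card_filter_add_card_filter_not (s := univ) (hL.eigenvalues · = 0)
  have hrank := (G.lapMatrix ℝ).mulVecLin.finrank_range_add_finrank_ker
  rw [Module.finrank_fintype_fun_eq_card, ← rank, hL.rank_eq_card_non_zero_eigs,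
    Fintype.card_subtype] at hrank
  rw [card_univ] at hsplit
  simp only [ne_eq] at hrank
  rw [card_connectedComponent_eq_finrank_ker_toLin'_lapMatrix]
  change _ = Module.finrank ℝ (LinearMap.ker (G.lapMatrix ℝ).mulVecLin)
  omega

theorem Connected.distMatrix_eq_of_forall_dist_le_two {α : Type*} [DecidableEq α]
    {G : SimpleGraph α} [DecidableRel G.Adj] (hconn : G.Connected)
    (hdiam : ∀ u v, G.dist u v ≤ 2) :
    distMatrix G = Matrix.of (fun _ _ => 2) - (2 : ℝ) • 1 - G.adjMatrix ℝ := by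
  ext u v
  rcases eq_or_ne u v with rfl | huv
  · simp [distMatrix]
  by_cases hadj : G.Adj u v
  · simp [distMatrix, dist_eq_one_iff_adj.mpr hadj, huv, hadj]
    norm_num
  · have hpos := hconn.pos_dist_of_ne huv
    have hne : G.dist u v ≠ 1 := fun h => hadj (dist_eq_one_iff_adj.mp h)
    have h2 : G.dist u v = 2 := by have := hdiam u v; omega
    simp [distMatrix, h2, huv, hadj]

variable {G : SimpleGraph V} [DecidableRel G.Adj]

theorem Connected.transmission_eq_of_forall_dist_le_two (hconn : G.Connected)
    (hdiam : ∀ u v, G.dist u v ≤ 2) (v : V) :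
    (transmission G v : ℝ) = 2 * Fintype.card V - 2 - G.degree v := by
  have : (transmission G v : ℝ) = ∑ u, distMatrix G v u := by simp [transmission, distMatrix]
  rw [this, hconn.distMatrix_eq_of_forall_dist_le_two hdiam]
  simp [sum_sub_distrib, one_apply, ← neighborFinset_eq_filter]
  ring

theorem Connected.wiener_eq_of_forall_dist_le_two (hconn : G.Connected)
    (hdiam : ∀ u v, G.dist u v ≤ 2) :
    wiener G = (Fintype.card V : ℝ) ^ 2 - Fintype.card V - #G.edgeFinset := by
  have hdeg : ∑ v, (G.degree v : ℝ) = 2 * #G.edgeFinset := by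
    exact_mod_cast G.sum_degrees_eq_twice_card_edges
  simp only [wiener, hconn.transmission_eq_of_forall_dist_le_two hdiam, sum_sub_distrib, hdeg]
  simp
  ring

theorem Connected.distLap_eq_of_forall_dist_le_two (hconn : G.Connected)
    (hdiam : ∀ u v, G.dist u v ≤ 2) :
    distLap G = (2 * Fintype.card V : ℝ) • 1 - Matrix.of (fun _ _ => 2) - G.lapMatrix ℝ := by
  ext u v
  rcases eq_or_ne u v with rfl | huv
  · simp [distLap, hconn.distMatrix_eq_of_forall_dist_le_two hdiam,
      hconn.transmission_eq_of_forall_dist_le_two hdiam, lapMatrix, degMatrix]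
  · simp [distLap, hconn.distMatrix_eq_of_forall_dist_le_two hdiam, huv, lapMatrix, degMatrix]
    ring

theorem Connected.distLap_mulVec_of_lapMatrix_mulVec_eq_smul (hconn : G.Connected)
    (hdiam : ∀ u v, G.dist u v ≤ 2) {x : V → ℝ} {c : ℝ} (hx : G.lapMatrix ℝ *ᵥ x = c • x) :
    distLap G *ᵥ x = (if c = 0 then 0 else 2 * Fintype.card V - c) • x := by
  have hJ : Matrix.of (fun _ _ => 2 : V → V → ℝ) *ᵥ x = fun _ => 2 * ∑ v, x v := by
    ext
    simp [mulVec, dotProduct, mul_sum]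
  rw [hconn.distLap_eq_of_forall_dist_le_two hdiam, sub_mulVec, sub_mulVec, hJ, hx,
    smul_mulVec, one_mulVec]
  split_ifs with hc
  · obtain ⟨v⟩ := hconn.nonempty
    have hconst : ∀ u, x u = x v := fun u =>
      (lapMatrix_mulVec_eq_zero_iff_forall_reachable G).mp (by rw [hx, hc, zero_smul]) u v
        (hconn.preconnected u v)
    ext u
    simp [hc, hconst]
    ring
  · ext u
    simp [sum_eq_zero_of_lapMatrix_mulVec_eq_smul G hc hx]
    ring

theorem Connected.map_eigenvalues_distLap_of_forall_dist_le_two (hconn : G.Connected)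
    (hdiam : ∀ u v, G.dist u v ≤ 2) (hD : (distLap G).IsHermitian)
    (hL : (G.lapMatrix ℝ).IsHermitian) :
    univ.val.map hD.eigenvalues = univ.val.map fun i =>
      if hL.eigenvalues i = 0 then 0 else 2 * Fintype.card V - hL.eigenvalues i :=
  hD.map_eigenvalues_eq_of_orthonormalBasis hL.eigenvectorBasis _ fun i =>
    hconn.distLap_mulVec_of_lapMatrix_mulVec_eq_smul hdiam (hL.mulVec_eigenvectorBasis i)

end SimpleGraph

theorem stmt5_general {n : ℕ} (G : SimpleGraph (Fin n)) [DecidableRel G.Adj]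
    (hconn : G.Connected) (hdiam : diamTwo G)
    (m : ℕ) (hm : m = G.edgeFinset.card)
    (ρ μ : Fin n → ℝ)
    (hρ : IsSpectrum (distLap G) ρ) (hμ : IsSpectrum (G.lapMatrix ℝ) μ)
    (σ t : ℕ)
    (hσ : σ = (Finset.univ.filter (fun i => 2 * wiener G / n < ρ i)).card)
    (ht : t = (Finset.univ.filter (fun i => 2 * (m : ℝ) / n < μ i)).card) :
    n - (t + 1) ≤ σ := by
  obtain ⟨hD, -⟩ := hρ.2
  obtain ⟨hL, -⟩ := hμ.2
  have hn : (n : ℝ) ≠ 0 := Nat.cast_ne_zero.mpr (Fin.pos_iff_nonempty.mpr hconn.nonempty).ne'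
  have hW : 2 * wiener G / n = 2 * n - 2 - 2 * m / n := by
    rw [hconn.wiener_eq_of_forall_dist_le_two hdiam.1, hm, Fintype.card_fin]
    field_simp
  have hzero : #{i | hL.eigenvalues i = 0} ≤ 1 := by
    rw [G.card_filter_eigenvalues_lapMatrix_eq_zero hL]
    exact Fintype.card_le_one_iff_subsingleton.mpr
      hconn.preconnected.subsingleton_connectedComponent
  rw [hσ, ht, hρ.card_filter_eq hD, hμ.card_filter_eq hL, card_filter_comp_eq_of_map_eq
    (hconn.map_eigenvalues_distLap_of_forall_dist_le_two hdiam.1 hD hL), Fintype.card_fin]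
  calc n - _ = Fintype.card (Fin n) - _ := by rw [Fintype.card_fin]
    _ ≤ _ := Fintype.card_sub_le_card_filter_of_forall_or hzero fun i => ?_
  by_cases hle : 2 * (m : ℝ) / n < hL.eigenvalues i
  · exact .inl hle
  by_cases h0 : hL.eigenvalues i = 0
  · exact .inr (.inl h0)
  · refine .inr (.inr ?_)
    rw [if_neg h0, hW]
    linarith

theorem stmt5 {n : ℕ} (hn : 3 ≤ n) (G : SimpleGraph (Fin n)) [DecidableRel G.Adj]
    (hconn : G.Connected) (hdiam : diamTwo G)
    (m : ℕ) (hm : m = G.edgeFinset.card)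
    (ρ μ : Fin n → ℝ)
    (hρ : IsSpectrum (distLap G) ρ) (hμ : IsSpectrum (G.lapMatrix ℝ) μ)
    (σ t : ℕ)
    (hσ : σ = (Finset.univ.filter (fun i => 2 * wiener G / n < ρ i)).card)
    (ht : t = (Finset.univ.filter (fun i => 2 * (m : ℝ) / n < μ i)).card) :
    n - (t + 1) ≤ σ :=
  stmt5_general G hconn hdiam m hm ρ μ hρ hμ σ t hσ ht
end

section
/- For a connected graph G of order n ≥ 3, the second smallest distance Laplacian eigenvalue satisfies ρ^L_{n−1}(G) ≤ (n/(n−1))·Tr_min, where Tr_min is the minimum vertex transmission of G. -/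
open Finset Matrix BigOperators

variable {V : Type*} [Fintype V] [DecidableEq V]

/-!
Courant–Fischer on the plane spanned by the all-ones vector `𝟙` and `x = e_v - 𝟙 / n`, where `v` is
a vertex of minimum transmission. Since `Dᴸ` is symmetric with `Dᴸ 𝟙 = 0` and `𝟙 ⊥ x`, every vector
`a 𝟙 + b x` has Rayleigh quotient at most `xᵀ Dᴸ x / xᵀ x = Tr(v) / (1 - 1 / n)`. Some nonzero
vector of that plane is orthogonal to an eigenvector of the smallest eigenvalue, and on that
orthogonal complement the quadratic form is at least the second smallest eigenvalue times `‖·‖²`.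
-/

namespace Matrix.IsHermitian

variable {ι : Type*} [Fintype ι] [DecidableEq ι] {A : Matrix ι ι ℝ} (hA : A.IsHermitian)

lemma eigenvectorUnitary_mul_transpose :
    (hA.eigenvectorUnitary : Matrix ι ι ℝ) * (hA.eigenvectorUnitary : Matrix ι ι ℝ)ᵀ = 1 := by
  simpa [Matrix.star_eq_conjTranspose] using Unitary.mul_star_self_of_mem hA.eigenvectorUnitary.2

lemma transpose_eigenvectorUnitary_mulVec_apply (y : ι → ℝ) (j : ι) :
    ((hA.eigenvectorUnitary : Matrix ι ι ℝ)ᵀ *ᵥ y) j = ⇑(hA.eigenvectorBasis j) ⬝ᵥ y :=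
  rfl

lemma dotProduct_self_eq_sum_sq (y : ι → ℝ) :
    y ⬝ᵥ y = ∑ j, (⇑(hA.eigenvectorBasis j) ⬝ᵥ y) ^ 2 := by
  set U : Matrix ι ι ℝ := ↑hA.eigenvectorUnitary
  calc y ⬝ᵥ y = y ⬝ᵥ ((U * Uᵀ) *ᵥ y) := by rw [hA.eigenvectorUnitary_mul_transpose, one_mulVec]
    _ = (Uᵀ *ᵥ y) ⬝ᵥ (Uᵀ *ᵥ y) := by
      rw [← mulVec_mulVec, dotProduct_mulVec, ← mulVec_transpose]
    _ = _ := Finset.sum_congr rfl fun j _ => by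
      rw [hA.transpose_eigenvectorUnitary_mulVec_apply, sq]

lemma dotProduct_mulVec_self_eq_sum (y : ι → ℝ) :
    y ⬝ᵥ (A *ᵥ y) = ∑ j, hA.eigenvalues j * (⇑(hA.eigenvectorBasis j) ⬝ᵥ y) ^ 2 := by
  set U : Matrix ι ι ℝ := ↑hA.eigenvectorUnitary
  set μ := hA.eigenvalues
  have hdiag : U * diagonal μ * Uᵀ = A := by
    simpa [Unitary.conjStarAlgAut_apply, Matrix.star_eq_conjTranspose] using
      hA.spectral_theorem.symm
  calc y ⬝ᵥ (A *ᵥ y) = (Uᵀ *ᵥ y) ⬝ᵥ (diagonal μ *ᵥ (Uᵀ *ᵥ y)) := by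
        rw [← hdiag, ← mulVec_mulVec, ← mulVec_mulVec, dotProduct_mulVec, ← mulVec_transpose]
    _ = _ := Finset.sum_congr rfl fun j _ => by
      rw [mulVec_diagonal, hA.transpose_eigenvectorUnitary_mulVec_apply]
      ring

end Matrix.IsHermitian

lemma Matrix.IsHermitian.penultimate_mul_dotProduct_self_le_of_orthogonal {n : ℕ} (hn : 0 < n)
    {M : Matrix (Fin n) (Fin n) ℝ} (hM : M.IsHermitian) {ρ : Fin n → ℝ} (hρ : Antitone ρ)
    {e : Fin n ≃ Fin n} (he : ∀ i, ρ i = hM.eigenvalues (e i)) {y : Fin n → ℝ}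
    (hy : ⇑(hM.eigenvectorBasis (e ⟨n - 1, by omega⟩)) ⬝ᵥ y = 0) :
    ρ ⟨n - 2, by omega⟩ * (y ⬝ᵥ y) ≤ y ⬝ᵥ (M *ᵥ y) := by
  rw [hM.dotProduct_self_eq_sum_sq, hM.dotProduct_mulVec_self_eq_sum, Finset.mul_sum]
  conv_lhs => rw [← e.sum_comp]
  conv_rhs => rw [← e.sum_comp]
  refine Finset.sum_le_sum fun i _ => ?_
  rw [← he]
  rcases (show i.val = n - 1 ∨ i.val ≤ n - 2 by omega) with hi | hi
  · rw [show i = ⟨n - 1, by omega⟩ from Fin.ext hi, hy]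
    simp
  · exact mul_le_mul_of_nonneg_right (hρ (Fin.le_def.mpr hi)) (sq_nonneg _)

lemma IsSpectrum.penultimate_mul_dotProduct_self_le {n : ℕ} (hn : 0 < n)
    {M : Matrix (Fin n) (Fin n) ℝ} {ρ : Fin n → ℝ} (hρ : IsSpectrum M ρ) {z x : Fin n → ℝ}
    (hz : M *ᵥ z = 0) (hz₀ : z ≠ 0) (hzx : z ⬝ᵥ x = 0) (hx : 0 ≤ x ⬝ᵥ (M *ᵥ x)) :
    ρ ⟨n - 2, by omega⟩ * (x ⬝ᵥ x) ≤ x ⬝ᵥ (M *ᵥ x) := by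
  obtain ⟨hanti, hM, e, he⟩ := hρ
  set u := ⇑(hM.eigenvectorBasis (e ⟨n - 1, by omega⟩))
  set r := ρ ⟨n - 2, by omega⟩
  have hxx : 0 ≤ x ⬝ᵥ x := by simpa using dotProduct_self_star_nonneg x
  rcases le_or_gt r 0 with hr | hr
  · nlinarith
  have hc : u ⬝ᵥ z ≠ 0 := by
    intro hc
    have hzz : 0 < z ⬝ᵥ z := by simpa using dotProduct_self_star_pos_iff.mpr hz₀
    have := hM.penultimate_mul_dotProduct_self_le_of_orthogonal hn hanti he hc
    rw [hz, dotProduct_zero] at this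
    nlinarith
  set c := u ⬝ᵥ z
  set d := u ⬝ᵥ x
  have hzMx : z ⬝ᵥ (M *ᵥ x) = 0 := by
    rw [dotProduct_mulVec, ← mulVec_transpose, (isHermitian_iff_isSymm.mp hM).eq, hz,
      zero_dotProduct]
  have hxz : x ⬝ᵥ z = 0 := by rw [dotProduct_comm, hzx]
  have hy : u ⬝ᵥ (c • x - d • z) = 0 := by
    rw [dotProduct_sub, dotProduct_smul, dotProduct_smul, smul_eq_mul, smul_eq_mul]; ring
  have hyy : (c • x - d • z) ⬝ᵥ (c • x - d • z) = c ^ 2 * (x ⬝ᵥ x) + d ^ 2 * (z ⬝ᵥ z) := by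
    simp only [dotProduct_sub, sub_dotProduct, dotProduct_smul, smul_dotProduct, smul_eq_mul,
      hxz, hzx]
    ring
  have hyMy : (c • x - d • z) ⬝ᵥ (M *ᵥ (c • x - d • z)) = c ^ 2 * (x ⬝ᵥ (M *ᵥ x)) := by
    simp only [mulVec_sub, mulVec_smul, hz, smul_zero, sub_zero, sub_dotProduct,
      dotProduct_smul, smul_dotProduct, smul_eq_mul, hzMx]
    ring
  have key := hM.penultimate_mul_dotProduct_self_le_of_orthogonal hn hanti he hy
  rw [hyy, hyMy] at key
  have hzz : 0 ≤ z ⬝ᵥ z := by simpa using dotProduct_self_star_nonneg z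
  have hc2 : 0 < c ^ 2 := by positivity
  refine le_of_mul_le_mul_left ?_ hc2
  nlinarith [mul_nonneg hr.le (mul_nonneg (sq_nonneg d) hzz)]

lemma IsSpectrum.penultimate_le_of_mulVec_one {n : ℕ} (hn : 2 ≤ n)
    {M : Matrix (Fin n) (Fin n) ℝ} {ρ : Fin n → ℝ} (hρ : IsSpectrum M ρ) (hM₁ : M *ᵥ 1 = 0)
    (v : Fin n) (hv : 0 ≤ M v v) :
    ρ ⟨n - 2, by omega⟩ ≤ n / (n - 1) * M v v := by
  have hsymm : Mᵀ = M := (isHermitian_iff_isSymm.mp hρ.2.1).eq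
  have hn₁ : (0 : ℝ) < n - 1 := sub_pos.mpr (Nat.one_lt_cast.mpr (by omega))
  set x : Fin n → ℝ := Pi.single v 1 - (n : ℝ)⁻¹ • 1 with hx
  have hMx : M *ᵥ x = M *ᵥ Pi.single v 1 := by
    rw [mulVec_sub, mulVec_smul, hM₁, smul_zero, sub_zero]
  have h1x : 1 ⬝ᵥ x = 0 := by
    simp only [x, dotProduct_sub, dotProduct_smul, dotProduct_single, one_dotProduct_one,
      Fintype.card_fin, Pi.one_apply, smul_eq_mul]
    field_simp
    ring
  have hxx : x ⬝ᵥ x = 1 - (n : ℝ)⁻¹ := by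
    nth_rw 1 [hx]
    rw [sub_dotProduct, smul_dotProduct, single_dotProduct, h1x]
    simp [x]
  have hxMx : x ⬝ᵥ (M *ᵥ x) = M v v := by
    rw [hMx, dotProduct_mulVec, ← mulVec_transpose, hsymm, hMx, dotProduct_single,
      mulVec_single_one, mul_one]
    rfl
  have key := hρ.penultimate_mul_dotProduct_self_le (by omega) hM₁
    (fun h => by simpa using congrFun h ⟨0, by omega⟩) h1x (hxMx ▸ hv)
  rw [hxx, hxMx] at key
  calc ρ ⟨n - 2, by omega⟩ = n / (n - 1) * (ρ ⟨n - 2, by omega⟩ * (1 - (n : ℝ)⁻¹)) := by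
        field_simp
    _ ≤ n / (n - 1) * M v v := mul_le_mul_of_nonneg_left key (div_pos (by positivity) hn₁).le

lemma distLap_mulVec_one (G : SimpleGraph V) : distLap G *ᵥ 1 = 0 := by
  ext u
  rw [distLap, sub_mulVec, Pi.sub_apply, mulVec_diagonal, Pi.zero_apply, sub_eq_zero]
  simp [mulVec, dotProduct, distMatrix, transmission]

lemma distLap_apply_self (G : SimpleGraph V) (v : V) : distLap G v v = transmission G v := by
  simp [distLap, distMatrix]

theorem stmt7 {n : ℕ} (hn : 3 ≤ n) (G : SimpleGraph (Fin n))
    (ρ : Fin n → ℝ) (hρ : IsSpectrum (distLap G) ρ)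
    (Trmin : ℕ)
    (hTr : Trmin = Finset.univ.inf' ⟨⟨0, by omega⟩, Finset.mem_univ _⟩ (transmission G)) :
    ρ ⟨n - 2, by omega⟩ ≤ (n : ℝ) / ((n : ℝ) - 1) * (Trmin : ℝ) := by
  obtain ⟨v, -, hv⟩ := Finset.exists_mem_eq_inf' ⟨⟨0, by omega⟩, Finset.mem_univ _⟩
    (transmission G)
  have := hρ.penultimate_le_of_mulVec_one (by omega) (distLap_mulVec_one G) v
    (by rw [distLap_apply_self]; positivity)
  rwa [distLap_apply_self, ← hv, ← hTr] at this
end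

section
/- The distance Laplacian spectrum of the complete bipartite graph K_{a,b} with a + b = n is { (2n−a) with multiplicity b−1, (2n−b) with multiplicity a−1, n with multiplicity 1, 0 with multiplicity 1 }, and its Wiener index satisfies 2W(K_{a,b}) = 2n² − 2n − 2ab. -/
open Finset Matrix BigOperators

variable {V : Type*} [Fintype V] [DecidableEq V]

/-- Complete bipartite graph on `Fin n`, parts `{i : i < a}` and `{i : a ≤ i}`. -/
def completeBip (n a : ℕ) : SimpleGraph (Fin n) :=
  SimpleGraph.fromRel (fun u v => ((u : ℕ) < a) ≠ ((v : ℕ) < a))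

/-!
Let `f : Fin n → Fin 2` record the side of a vertex. Distances in `K_{a,b}` are `1` across and
`2` within a side, so `D^L = Λ - C(f u, f v)` with `Λ = 2n - b` on the `a`-side, `Λ = 2n - a` on
the `b`-side, and `C = [[2, 1], [1, 2]]`. The second term factors as `U C Uᵀ` through the `n × 2`
indicator matrix `U` of `f`, so the matrix determinant lemma gives, for `x ∉ {2n - a, 2n - b}`,
`det (x - D^L) = (x - 2n + b)^a (x - 2n + a)^b · det (1 + C Uᵀ (x - Λ)⁻¹ U)`, a `2 × 2`
determinant equal to `x (x - n) / ((x - 2n + b) (x - 2n + a))`. Two polynomials agreeing off a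
finite set are equal, which gives the characteristic polynomial and hence the spectrum. The
transmissions are `n + a - 2` and `n + b - 2`, whose sum is `2W`.
-/

open Polynomial

section FiberIndicator

-- `R` is explicit: left to unification, `fiberIndicator f * C` can pick up the `CStarMatrix` product.
variable {α ι : Type*} (R : Type*) [DecidableEq ι]

def Matrix.fiberIndicator [Zero R] [One R] (f : α → ι) : Matrix α ι R :=
  of fun i s => if f i = s then 1 else 0

lemma Matrix.fiberIndicator_mul_mul_transpose [Fintype ι] [CommSemiring R] (f : α → ι)
    (C : Matrix ι ι R) :
    fiberIndicator R f * C * (fiberIndicator R f)ᵀ = C.submatrix f f := by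
  ext i k
  simp [fiberIndicator, Matrix.mul_apply, ite_mul]

lemma Matrix.transpose_fiberIndicator_mul_diagonal_mul [Fintype α] [DecidableEq α]
    [CommSemiring R] (f : α → ι) (g : α → R) :
    (fiberIndicator R f)ᵀ * diagonal g * fiberIndicator R f =
      diagonal fun s => ∑ i with f i = s, g i := by
  ext s t
  rw [mul_apply]
  simp_rw [mul_diagonal]
  by_cases hst : s = t
  · subst hst
    simp +contextual [fiberIndicator, Finset.sum_filter]
  · refine (Finset.sum_eq_zero fun i _ => ?_).trans (diagonal_apply_ne _ hst).symm
    simp only [fiberIndicator, transpose_apply, of_apply]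
    split_ifs <;> simp_all

variable {R}

lemma Matrix.det_diagonal_add_submatrix [Fintype α] [DecidableEq α] [Fintype ι] [Field R]
    {d : α → R} (hd : ∀ i, d i ≠ 0) (f : α → ι) (C : Matrix ι ι R) :
    (diagonal d + C.submatrix f f).det =
      (∏ i, d i) * (1 + C * diagonal fun s => ∑ i with f i = s, (d i)⁻¹).det := by
  have hinv : (diagonal d)⁻¹ = diagonal fun i => (d i)⁻¹ :=
    inv_eq_right_inv (by simp [diagonal_mul_diagonal, hd])
  have hunit : IsUnit (diagonal d).det := by
    simpa [det_diagonal, Finset.prod_ne_zero_iff] using hd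
  rw [← fiberIndicator_mul_mul_transpose R, Matrix.mul_assoc, det_add_mul _ _ hunit, det_diagonal,
    hinv, Matrix.mul_assoc, Matrix.mul_assoc, ← Matrix.mul_assoc (fiberIndicator R f)ᵀ,
    transpose_fiberIndicator_mul_diagonal_mul]

end FiberIndicator

section CompleteMultipartite

variable {α ι : Type*} [DecidableEq α] [DecidableEq ι] {G : SimpleGraph α} {f : α → ι}

lemma SimpleGraph.dist_eq_of_adj_iff_ne (hG : ∀ u v, G.Adj u v ↔ f u ≠ f v)
    (hf : ∀ u, ∃ w, f w ≠ f u) (u v : α) :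
    G.dist u v = if u = v then 0 else if f u = f v then 2 else 1 := by
  split_ifs with huv hf_eq
  · simp [huv]
  · obtain ⟨w, hw⟩ := hf u
    have huw : G.Adj u w := (hG u w).2 (Ne.symm hw)
    have hwv : G.Adj w v := (hG w v).2 (hf_eq ▸ hw)
    have hle : G.dist u v ≤ 2 := dist_le (huw.toWalk.append hwv.toWalk)
    have hne0 : G.dist u v ≠ 0 :=
      (dist_ne_zero_iff_ne_and_reachable).2 ⟨huv, ⟨huw.toWalk.append hwv.toWalk⟩⟩
    have hne1 : G.dist u v ≠ 1 := fun h => (hG u v).1 (dist_eq_one_iff_adj.1 h) hf_eq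
    omega
  · exact dist_eq_one_iff_adj.2 ((hG u v).2 hf_eq)

variable [Fintype α]

lemma transmission_eq_of_adj_iff_ne (hG : ∀ u v, G.Adj u v ↔ f u ≠ f v)
    (hf : ∀ u, ∃ w, f w ≠ f u) (v : α) :
    (transmission G v : ℝ) = Fintype.card α + #{u | f u = f v} - 2 := by
  have hterm : ∀ u, (G.dist v u : ℝ) =
      1 + (if f u = f v then 1 else 0) - (if v = u then 2 else 0) := by
    intro u
    rw [SimpleGraph.dist_eq_of_adj_iff_ne hG hf]
    rcases eq_or_ne v u with rfl | hvu
    · norm_num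
    · simp only [hvu, if_false, eq_comm (a := f u)]
      split_ifs <;> norm_num
  simp only [transmission, Nat.cast_sum, hterm, Finset.sum_sub_distrib, Finset.sum_add_distrib]
  simp [Finset.sum_boole]

lemma distLap_eq_of_adj_iff_ne (hG : ∀ u v, G.Adj u v ↔ f u ≠ f v)
    (hf : ∀ u, ∃ w, f w ≠ f u) :
    distLap G = diagonal (fun v => (Fintype.card α + #{u | f u = f v} : ℝ)) -
      (of fun s t : ι => if s = t then (2 : ℝ) else 1).submatrix f f := by
  ext u v
  simp only [distLap, distMatrix, Matrix.sub_apply, diagonal_apply, submatrix_apply, of_apply,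
    transmission_eq_of_adj_iff_ne hG hf, SimpleGraph.dist_eq_of_adj_iff_ne hG hf]
  split_ifs <;> simp_all

end CompleteMultipartite

section CompleteBip

variable {a b : ℕ}

def completeBipSide (a : ℕ) {n : ℕ} (v : Fin n) : Fin 2 := if (v : ℕ) < a then 0 else 1

@[simp] lemma completeBipSide_castAdd (i : Fin a) : completeBipSide a (Fin.castAdd b i) = 0 := by
  simp [completeBipSide]

@[simp] lemma completeBipSide_natAdd (j : Fin b) : completeBipSide a (Fin.natAdd a j) = 1 := by
  simp [completeBipSide]

lemma completeBip_adj_iff {n : ℕ} (u v : Fin n) :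
    (completeBip n a).Adj u v ↔ completeBipSide a u ≠ completeBipSide a v := by
  simp only [completeBip, SimpleGraph.fromRel_adj, completeBipSide]
  split_ifs <;> simp_all <;> omega

lemma exists_completeBipSide_ne (ha : 1 ≤ a) (hb : 1 ≤ b) (u : Fin (a + b)) :
    ∃ w : Fin (a + b), completeBipSide a w ≠ completeBipSide a u := by
  by_cases hu : (u : ℕ) < a
  · exact ⟨Fin.natAdd a ⟨0, hb⟩, by simp [completeBipSide, hu]⟩
  · exact ⟨Fin.castAdd b ⟨0, ha⟩, by simp [completeBipSide, hu]; omega⟩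

lemma card_completeBipSide_eq (s : Fin 2) :
    #{u : Fin (a + b) | completeBipSide a u = s} = ![a, b] s := by
  rw [Finset.card_filter, Fin.sum_univ_add]
  fin_cases s <;> simp

lemma distLap_completeBip (ha : 1 ≤ a) (hb : 1 ≤ b) :
    distLap (completeBip (a + b) a) =
      diagonal (![2 * (a + b : ℝ) - b, 2 * (a + b : ℝ) - a] ∘ completeBipSide a) -
        (of fun s t : Fin 2 => if s = t then (2 : ℝ) else 1).submatrix
          (completeBipSide a) (completeBipSide a) := by
  rw [distLap_eq_of_adj_iff_ne completeBip_adj_iff (exists_completeBipSide_ne ha hb)]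
  congr 2
  ext v
  rw [Function.comp_apply, Fintype.card_fin, card_completeBipSide_eq]
  generalize completeBipSide a v = s
  fin_cases s <;> simp <;> ring

lemma two_mul_wiener_completeBip (ha : 1 ≤ a) (hb : 1 ≤ b) :
    2 * wiener (completeBip (a + b) a) =
      2 * (a + b : ℝ) ^ 2 - 2 * (a + b) - 2 * a * b := by
  rw [wiener, mul_div_cancel₀ _ two_ne_zero, Fin.sum_univ_add]
  simp only [transmission_eq_of_adj_iff_ne completeBip_adj_iff (exists_completeBipSide_ne ha hb),
    completeBipSide_castAdd, completeBipSide_natAdd, card_completeBipSide_eq, Fintype.card_fin,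
    Nat.cast_add, cons_val_zero, cons_val_one, sum_sub_distrib, sum_const, card_univ, nsmul_eq_mul]
  ring

lemma eval_charpoly_distLap_completeBip (ha : 1 ≤ a) (hb : 1 ≤ b) {x : ℝ}
    (hxa : x ≠ 2 * (a + b) - a) (hxb : x ≠ 2 * (a + b) - b) :
    (distLap (completeBip (a + b) a)).charpoly.eval x =
      (x - (2 * (a + b) - a)) ^ (b - 1) * (x - (2 * (a + b) - b)) ^ (a - 1) *
        ((x - (a + b)) * x) := by
  rw [eval_charpoly, distLap_completeBip ha hb, scalar_apply, ← sub_add, diagonal_sub]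
  set Λ : Fin 2 → ℝ := ![2 * (a + b : ℝ) - b, 2 * (a + b : ℝ) - a] with hΛ
  have hΛx : ∀ s, x - Λ s ≠ 0 := by
    intro s
    fin_cases s <;> simp [hΛ, sub_ne_zero, hxa, hxb]
  have hfiber : ∀ s, ∑ i : Fin (a + b) with completeBipSide a i = s,
      (x - (Λ ∘ completeBipSide a) i)⁻¹ = ![(a : ℝ), b] s * (x - Λ s)⁻¹ := by
    intro s
    rw [Finset.sum_congr rfl fun i hi => by rw [Function.comp_apply, (Finset.mem_filter.1 hi).2],
      sum_const, card_completeBipSide_eq, nsmul_eq_mul]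
    fin_cases s <;> simp
  have hprod : ∏ i : Fin (a + b), (x - (Λ ∘ completeBipSide a) i) =
      (x - Λ 0) ^ a * (x - Λ 1) ^ b := by
    simp [Fin.prod_univ_add]
  rw [det_diagonal_add_submatrix (d := fun i => x - (Λ ∘ completeBipSide a) i) (fun i => hΛx _),
    hprod]
  simp only [hfiber, det_fin_two, Matrix.add_apply, one_apply_eq, one_apply_ne zero_ne_one,
    one_apply_ne one_ne_zero, mul_diagonal, of_apply, cons_val_zero, cons_val_one, if_pos,
    if_neg zero_ne_one, if_neg one_ne_zero, one_mul, zero_add]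
  obtain ⟨a, rfl⟩ : ∃ a', a = a' + 1 := ⟨a - 1, by omega⟩
  obtain ⟨b, rfl⟩ : ∃ b', b = b' + 1 := ⟨b - 1, by omega⟩
  have h0 := hΛx 0
  have h1 := hΛx 1
  rw [Nat.add_sub_cancel, Nat.add_sub_cancel, pow_succ, pow_succ]
  field_simp
  simp only [hΛ, cons_val_zero, cons_val_one]
  push_cast
  ring

lemma charpoly_distLap_completeBip (ha : 1 ≤ a) (hb : 1 ≤ b) :
    (distLap (completeBip (a + b) a)).charpoly =
      ((Multiset.replicate (b - 1) (2 * (a + b : ℝ) - a) +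
        Multiset.replicate (a - 1) (2 * (a + b : ℝ) - b) + {(a + b : ℝ), 0}).map
          fun r => X - C r).prod := by
  refine eq_of_infinite_eval_eq _ _
    ((Set.toFinite ({2 * (a + b : ℝ) - a, 2 * (a + b : ℝ) - b} : Set ℝ)).infinite_compl.mono
      fun x hx => ?_)
  simp only [Set.mem_compl_iff, Set.mem_insert_iff, Set.mem_singleton_iff, not_or] at hx
  rw [Set.mem_ofPred_eq, eval_charpoly_distLap_completeBip ha hb hx.1 hx.2, eval_multiset_prod]
  simp [mul_left_comm]

end CompleteBip

theorem stmt9 (a b : ℕ) (ha : 1 ≤ a) (hb : 1 ≤ b) (n : ℕ) (hn : n = a + b)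
    (hM : (distLap (completeBip n a)).IsHermitian) :
    eigMultiset _ hM =
      Multiset.replicate (b - 1) (2 * (n : ℝ) - a) +
        Multiset.replicate (a - 1) (2 * (n : ℝ) - b) + {(n : ℝ), 0} ∧
      2 * wiener (completeBip n a) = 2 * (n : ℝ) ^ 2 - 2 * n - 2 * a * b := by
  subst hn
  push_cast
  refine ⟨?_, two_mul_wiener_completeBip ha hb⟩
  have h := hM.roots_charpoly_eq_eigenvalues
  rw [charpoly_distLap_completeBip ha hb, roots_multiset_prod_X_sub_C] at h
  simpa [eigMultiset] using h.symm
end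

section
/- The distance Laplacian spectrum of the complete split graph CS_{t,n−t} (clique on t vertices joined completely to an independent set on n−t vertices) is { (2n−t) with multiplicity n−t−1, n with multiplicity t, 0 with multiplicity 1 }, and 2W(CS_{t,n−t}) = 2n(n−t−1) + t(t+1). -/
open Finset Matrix BigOperators

variable {V : Type*} [Fintype V] [DecidableEq V]

/-- Complete split graph on `Fin n`: clique `{i : i < t}` joined to independent set. -/
def completeSplit (n t : ℕ) : SimpleGraph (Fin n) :=
  SimpleGraph.fromRel (fun u v => (u : ℕ) < t ∨ (v : ℕ) < t)

/-!
Writing `K` for the clique and `S` for the independent set, the distance Laplacian of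
`CS_{t,n-t}` acts by `(D^L x)_u = n x_u - ∑ x + [u ∈ S] ((n - t) x_u - ∑_S x)`.
Hence the all-ones vector spans the kernel, zero-sum vectors supported on `K`, together with the
contrast `(n - t) 𝟙_K - t 𝟙_S`, are eigenvectors for `n`, and zero-sum vectors supported on `S`
are eigenvectors for `2n - t`. Helmert contrasts inside each part give an orthogonal eigenbasis;
a matrix with nonzero pairwise orthogonal columns is invertible, so it diagonalizes `D^L` and
fixes its characteristic polynomial, whose roots are the eigenvalues. Finally `2W = tr D^L` is
the sum of the eigenvalues.
-/

theorem Matrix.IsSymm.dotProduct_eq_zero_of_mulVec_eq_smul {ι R : Type*} [Fintype ι]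
    [CommRing R] [IsDomain R] {A : Matrix ι ι R} (hA : A.IsSymm) {x y : ι → R} {a b : R}
    (hx : A *ᵥ x = a • x) (hy : A *ᵥ y = b • y) (hab : a ≠ b) : x ⬝ᵥ y = 0 := by
  have h : a * (x ⬝ᵥ y) = b * (x ⬝ᵥ y) := by
    calc a * (x ⬝ᵥ y) = (A *ᵥ x) ⬝ᵥ y := by rw [hx, smul_dotProduct, smul_eq_mul]
      _ = x ⬝ᵥ (A *ᵥ y) := by rw [dotProduct_mulVec, ← mulVec_transpose, hA.eq]
      _ = b * (x ⬝ᵥ y) := by rw [hy, dotProduct_smul, smul_eq_mul]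
  have h' : (a - b) * (x ⬝ᵥ y) = 0 := by rw [sub_mul, h, sub_self]
  exact (mul_eq_zero.mp h').resolve_left (sub_ne_zero.mpr hab)

theorem Matrix.isUnit_det_of_pairwise_dotProduct_eq_zero {ι K : Type*} [Fintype ι]
    [DecidableEq ι] [Field K] [LinearOrder K] [IsStrictOrderedRing K] {M : Matrix ι ι K}
    (h0 : ∀ i, M i ≠ 0) (horth : Pairwise fun i j => M i ⬝ᵥ M j = 0) : IsUnit M.det := by
  have hgram : M * Mᵀ = diagonal fun i => M i ⬝ᵥ M i := by
    ext i j
    rw [mul_apply', diagonal_apply]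
    split_ifs with hij
    · subst hij; rfl
    · exact horth hij
  have hsq : M.det * M.det ≠ 0 := by
    have hdet := congrArg det hgram
    rw [det_mul, det_transpose, det_diagonal] at hdet
    rw [hdet]
    exact prod_ne_zero_iff.mpr fun i _ => dotProduct_self_eq_zero.not.mpr (h0 i)
  exact isUnit_iff_ne_zero.mpr (left_ne_zero_of_mul hsq)

open Polynomial in
theorem Matrix.charpoly_eq_prod_of_mul_eq_mul_diagonal {ι R : Type*} [Fintype ι]
    [DecidableEq ι] [CommRing R] {A P : Matrix ι ι R} {d : ι → R} (hP : IsUnit P.det)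
    (h : A * P = P * diagonal d) : A.charpoly = ∏ i, (X - C (d i)) := by
  have hA : A = P * diagonal d * P⁻¹ := by
    rw [← h, Matrix.mul_assoc, mul_nonsing_inv _ hP, Matrix.mul_one]
  rw [hA, charpoly_mul_comm, ← Matrix.mul_assoc, nonsing_inv_mul _ hP, Matrix.one_mul,
    charpoly_diagonal]

open Polynomial in
theorem eigMultiset_eq_map_of_orthogonal_eigenvectors {ι : Type*} [Fintype ι] [DecidableEq ι]
    {A : Matrix ι ι ℝ} (hA : A.IsHermitian) {x : ι → ι → ℝ} {d : ι → ℝ}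
    (hx : ∀ i, A *ᵥ x i = d i • x i) (hx0 : ∀ i, x i ≠ 0)
    (horth : ∀ i j, i ≠ j → d i = d j → x i ⬝ᵥ x j = 0) :
    eigMultiset A hA = univ.val.map d := by
  set M : Matrix ι ι ℝ := Matrix.of x
  have hMorth : Pairwise fun i j => M i ⬝ᵥ M j = 0 := by
    intro i j hij
    by_cases hd : d i = d j
    · exact horth i j hij hd
    · exact (isHermitian_iff_isSymm.mp hA).dotProduct_eq_zero_of_mulVec_eq_smul (hx i) (hx j) hd
  have hdet : IsUnit Mᵀ.det := by
    rw [det_transpose]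
    exact isUnit_det_of_pairwise_dotProduct_eq_zero hx0 hMorth
  have heig : A * Mᵀ = Mᵀ * diagonal d := by
    ext i j
    rw [mul_diagonal, mul_apply]
    simpa [mulVec, dotProduct, mul_comm, M] using congr_fun (hx j) i
  calc eigMultiset A hA = A.charpoly.roots := by
        simp [eigMultiset, hA.roots_charpoly_eq_eigenvalues]
    _ = univ.val.map d := by
        rw [charpoly_eq_prod_of_mul_eq_mul_diagonal hdet heig, ← roots_multiset_prod_X_sub_C
          (univ.val.map d), Finset.prod_eq_multiset_prod, Multiset.map_map]
        rfl

theorem distLap_mulVec_const (G : SimpleGraph V) (c : ℝ) : distLap G *ᵥ (fun _ => c) = 0 := by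
  ext u
  simp [distLap_mulVec_apply]

theorem two_mul_wiener_eq_trace_distLap (G : SimpleGraph V) :
    2 * wiener G = (distLap G).trace := by
  rw [wiener, mul_div_cancel₀ _ two_ne_zero]
  simp [distLap, distMatrix, trace]

theorem Fin.card_filter_le_val {n t : ℕ} (htn : t ≤ n) :
    #{v : Fin n | t ≤ (v : ℕ)} = n - t := by
  have h := card_filter_add_card_filter_not (s := (univ : Finset (Fin n))) (fun v => (v : ℕ) < t)
  simp only [Fin.card_filter_val_lt, card_univ, Fintype.card_fin, not_lt] at h
  omega

def helmert {n : ℕ} (a b : ℕ) : Fin n → ℝ := fun v =>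
  if a ≤ (v : ℕ) ∧ (v : ℕ) < b then 1 else if (v : ℕ) = b then -((b : ℝ) - a) else 0

section Helmert

variable {n a b : ℕ}

theorem helmert_eq_zero (hab : a ≤ b) {v : Fin n} (hv : (v : ℕ) < a ∨ b < v) :
    helmert a b v = 0 := by
  unfold helmert
  split_ifs <;> first | rfl | omega

theorem sum_helmert (hab : a ≤ b) (hb : b < n) : ∑ v : Fin n, helmert a b v = 0 := by
  have hsplit : ∀ m : ℕ,
      (if a ≤ m ∧ m < b then (1 : ℝ) else if m = b then -((b : ℝ) - a) else 0) =
        (if m ∈ Ico a b then 1 else 0) + if m = b then -((b : ℝ) - a) else 0 := by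
    intro m
    simp only [mem_Ico]
    split_ifs <;> first | omega | ring
  rw [show ∑ v : Fin n, helmert a b v = ∑ m ∈ range n, _ from
      Fin.sum_univ_eq_sum_range (fun m => if a ≤ m ∧ m < b then (1 : ℝ)
        else if m = b then -((b : ℝ) - a) else 0) n,
    sum_congr rfl fun m _ => hsplit m, sum_add_distrib, sum_ite_mem, sum_ite_eq',
    if_pos (mem_range.mpr hb), inter_eq_right.mpr fun m hm => by simp at hm ⊢; omega]
  simp [Nat.cast_sub hab]

theorem dotProduct_helmert_eq_zero (hab : a ≤ b) (hb : b < n) {y : Fin n → ℝ} {c : ℝ}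
    (hy : ∀ v : Fin n, a ≤ (v : ℕ) → (v : ℕ) ≤ b → y v = c) :
    y ⬝ᵥ helmert a b = 0 := by
  have hterm : ∀ v, y v * helmert a b v = c * helmert a b v := by
    intro v
    by_cases hv : a ≤ (v : ℕ) ∧ (v : ℕ) ≤ b
    · rw [hy v hv.1 hv.2]
    · rw [helmert_eq_zero hab (by omega), mul_zero, mul_zero]
  rw [dotProduct, sum_congr rfl fun v _ => hterm v, ← mul_sum, sum_helmert hab hb, mul_zero]

theorem helmert_ne_zero (hab : a < b) (hb : b < n) : helmert (n := n) a b ≠ 0 := by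
  intro h
  have := congr_fun h ⟨b, hb⟩
  simp only [helmert, lt_irrefl, and_false, if_false, if_true, Pi.zero_apply] at this
  have : (a : ℝ) < b := by exact_mod_cast hab
  linarith

theorem helmert_dotProduct_helmert {c : ℕ} (hab : a ≤ b) (hbc : b < c) (hc : c < n) :
    helmert a b ⬝ᵥ helmert (n := n) a c = 0 := by
  rw [dotProduct_comm]
  exact dotProduct_helmert_eq_zero hab (hbc.trans hc) fun v hav hvb => if_pos ⟨hav, by omega⟩

end Helmert

def cliqueIndepContrast (n t : ℕ) : Fin n → ℝ :=
  fun v => if (v : ℕ) < t then (n : ℝ) - t else -t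

def completeSplitEigenvector (n t : ℕ) (j : Fin n) : Fin n → ℝ :=
  if (j : ℕ) = 0 then fun _ => 1
  else if (j : ℕ) < t then helmert 0 j
  else if (j : ℕ) = t then cliqueIndepContrast n t
  else helmert t j

def completeSplitEigenvalue (n t : ℕ) (j : Fin n) : ℝ :=
  if (j : ℕ) = 0 then 0 else if (j : ℕ) ≤ t then n else 2 * n - t

section CompleteSplit

variable {n t : ℕ}

theorem completeSplit_adj {u v : Fin n} :
    (completeSplit n t).Adj u v ↔ u ≠ v ∧ ((u : ℕ) < t ∨ (v : ℕ) < t) := by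
  simp only [completeSplit, SimpleGraph.fromRel_adj]
  tauto

theorem completeSplit_dist (ht : 0 < t) {u v : Fin n} (huv : u ≠ v) :
    (completeSplit n t).dist u v = if (u : ℕ) < t ∨ (v : ℕ) < t then 1 else 2 := by
  split_ifs with h
  · exact SimpleGraph.dist_eq_one_iff_adj.mpr (completeSplit_adj.mpr ⟨huv, h⟩)
  · simp only [not_or, not_lt] at h
    let z : Fin n := ⟨0, by omega⟩
    have huz : (completeSplit n t).Adj u z :=
      completeSplit_adj.mpr ⟨fun h' => by simp [h', z] at h; omega, Or.inr ht⟩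
    have hzv : (completeSplit n t).Adj z v :=
      completeSplit_adj.mpr ⟨fun h' => by simp [← h', z] at h; omega, Or.inl ht⟩
    let p := SimpleGraph.Walk.cons huz (.cons hzv .nil)
    have hle := SimpleGraph.dist_le p
    have hgt := p.reachable.one_lt_dist_of_ne_of_not_adj huv
      fun hadj => by have := completeSplit_adj.mp hadj; omega
    simp only [p, SimpleGraph.Walk.length_cons, SimpleGraph.Walk.length_nil] at hle
    omega

theorem distLap_completeSplit_mulVec_apply (ht : 0 < t) (htn : t ≤ n) (x : Fin n → ℝ)
    (u : Fin n) :
    (distLap (completeSplit n t) *ᵥ x) u = n * x u - ∑ v, x v +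
      if t ≤ (u : ℕ) then (n - t) * x u - ∑ v with t ≤ v.val, x v else 0 := by
  have hterm : ∀ v, ((completeSplit n t).dist u v : ℝ) * (x u - x v) =
      (x u - x v) + if t ≤ (u : ℕ) ∧ t ≤ (v : ℕ) then x u - x v else 0 := by
    intro v
    rcases eq_or_ne u v with rfl | huv
    · simp
    · rw [completeSplit_dist ht huv]
      split_ifs <;> first | omega | (push_cast; ring)
  rw [distLap_mulVec_apply, sum_congr rfl fun v _ => hterm v, sum_add_distrib, sum_sub_distrib,
    sum_const, card_univ, Fintype.card_fin, nsmul_eq_mul]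
  congr 1
  split_ifs with hu
  · rw [← sum_filter]
    simp only [hu, true_and]
    rw [sum_sub_distrib, sum_const, Fin.card_filter_le_val htn, nsmul_eq_mul, Nat.cast_sub htn]
  · simp [hu]

theorem distLap_completeSplit_mulVec_of_clique_support (ht : 0 < t) (htn : t ≤ n)
    {x : Fin n → ℝ} (hx : ∀ v : Fin n, t ≤ (v : ℕ) → x v = 0) (hsum : ∑ v, x v = 0) :
    distLap (completeSplit n t) *ᵥ x = (n : ℝ) • x := by
  have hS : ∑ v with t ≤ v.val, x v = 0 := sum_eq_zero fun v hv => hx v (mem_filter.mp hv).2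
  ext u
  rw [distLap_completeSplit_mulVec_apply ht htn, hS, hsum]
  split_ifs with hu <;> simp [hx u, hu]

theorem distLap_completeSplit_mulVec_of_indep_support (ht : 0 < t) (htn : t ≤ n)
    {x : Fin n → ℝ} (hx : ∀ v : Fin n, (v : ℕ) < t → x v = 0) (hsum : ∑ v, x v = 0) :
    distLap (completeSplit n t) *ᵥ x = (2 * n - t : ℝ) • x := by
  ext u
  have hS : ∑ v with t ≤ v.val, x v = 0 := by
    rw [sum_filter_of_ne fun v _ hv => ?_, hsum]
    by_contra hvt
    exact hv (hx v (by omega))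
  rw [distLap_completeSplit_mulVec_apply ht htn, hS, hsum]
  split_ifs with hu
  · simp only [Pi.smul_apply, smul_eq_mul]; ring
  · simp [hx u (by omega)]

theorem distLap_completeSplit_mulVec_cliqueIndepContrast (ht : 0 < t) (htn : t ≤ n) :
    distLap (completeSplit n t) *ᵥ cliqueIndepContrast n t =
      (n : ℝ) • cliqueIndepContrast n t := by
  have hS : ∑ v with t ≤ v.val, cliqueIndepContrast n t v = -((n : ℝ) - t) * t := by
    unfold cliqueIndepContrast
    rw [sum_congr rfl fun v hv => if_neg (not_lt.mpr (mem_filter.mp hv).2), sum_const,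
      Fin.card_filter_le_val htn, nsmul_eq_mul, Nat.cast_sub htn]
    ring
  have hsum : ∑ v, cliqueIndepContrast n t v = 0 := by
    unfold cliqueIndepContrast
    simp only [sum_ite, sum_const, nsmul_eq_mul, Fin.card_filter_val_lt, not_lt,
      Fin.card_filter_le_val htn, min_eq_right htn, Nat.cast_sub htn]
    ring
  ext u
  rw [distLap_completeSplit_mulVec_apply ht htn, hS, hsum]
  simp only [Pi.smul_apply, smul_eq_mul, cliqueIndepContrast]
  split_ifs <;> first | omega | ring

theorem distLap_completeSplit_mulVec_eigenvector (ht : 0 < t) (htn : t ≤ n) (j : Fin n) :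
    distLap (completeSplit n t) *ᵥ completeSplitEigenvector n t j =
      completeSplitEigenvalue n t j • completeSplitEigenvector n t j := by
  unfold completeSplitEigenvector completeSplitEigenvalue
  rcases Nat.eq_zero_or_pos j with h0 | h0
  · simp [h0, distLap_mulVec_const]
  rw [if_neg h0.ne', if_neg h0.ne']
  rcases lt_trichotomy (j : ℕ) t with hj | hj | hj
  · rw [if_pos hj, if_pos hj.le]
    exact distLap_completeSplit_mulVec_of_clique_support ht htn
      (fun v hv => helmert_eq_zero (Nat.zero_le _) (by omega)) (sum_helmert (Nat.zero_le _) j.2)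
  · rw [if_neg hj.not_lt, if_pos hj, if_pos hj.le]
    exact distLap_completeSplit_mulVec_cliqueIndepContrast ht htn
  · rw [if_neg (by omega), if_neg hj.ne', if_neg (by omega)]
    exact distLap_completeSplit_mulVec_of_indep_support ht htn
      (fun v hv => helmert_eq_zero hj.le (by omega)) (sum_helmert hj.le j.2)

theorem completeSplitEigenvector_ne_zero (htn : t < n) (j : Fin n) :
    completeSplitEigenvector n t j ≠ 0 := by
  unfold completeSplitEigenvector
  split_ifs with h0 hlt heq
  · exact fun h => one_ne_zero (congr_fun h ⟨0, by omega⟩)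
  · exact helmert_ne_zero (by omega) j.2
  · intro h
    have := congr_fun h ⟨0, by omega⟩
    rw [cliqueIndepContrast, if_pos (by simp; omega), Pi.zero_apply, sub_eq_zero] at this
    exact absurd (Nat.cast_injective this) htn.ne'
  · exact helmert_ne_zero (by omega) j.2

theorem completeSplitEigenvector_dotProduct (htn : t < n) {j k : Fin n} (hjk : j ≠ k)
    (hd : completeSplitEigenvalue n t j = completeSplitEigenvalue n t k) :
    completeSplitEigenvector n t j ⬝ᵥ completeSplitEigenvector n t k = 0 := by
  wlog h : j < k generalizing j k
  · rw [dotProduct_comm]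
    exact this hjk.symm hd.symm (lt_of_le_of_ne (not_lt.mp h) hjk.symm)
  have h : (j : ℕ) < k := h
  have htn' : (t : ℝ) < n := by exact_mod_cast htn
  -- `0`, `n` and `2n - t` are pairwise distinct because `t < n`.
  have hclass : 0 < (j : ℕ) ∧ ((k : ℕ) ≤ t ∨ t < j) := by
    unfold completeSplitEigenvalue at hd
    split_ifs at hd <;> first | omega | (exfalso; linarith)
  unfold completeSplitEigenvector
  rw [if_neg hclass.1.ne', if_neg (show (k : ℕ) ≠ 0 by omega)]
  rcases hclass.2 with hkt | htj
  · rw [if_pos (by omega : (j : ℕ) < t)]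
    rcases hkt.lt_or_eq with hkt | hkt
    · rw [if_pos hkt]
      exact helmert_dotProduct_helmert (Nat.zero_le _) h k.2
    · rw [if_neg hkt.not_lt, if_pos hkt, dotProduct_comm]
      exact dotProduct_helmert_eq_zero (Nat.zero_le _) j.2 fun v _ hv => if_pos (by omega)
  · rw [if_neg (by omega), if_neg (by omega), if_neg (by omega), if_neg (by omega)]
    exact helmert_dotProduct_helmert htj.le h k.2

theorem map_completeSplitEigenvalue (htn : t < n) :
    univ.val.map (completeSplitEigenvalue n t) =
      Multiset.replicate (n - t - 1) (2 * (n : ℝ) - t) + Multiset.replicate t (n : ℝ) +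
        {0} := by
  obtain ⟨m, rfl⟩ : ∃ m, n = 1 + t + m := ⟨n - t - 1, by omega⟩
  have hclique : ∀ i : Fin t, 1 + (i : ℕ) ≤ t := fun i => by omega
  have hindep : ∀ i : Fin m, ¬ 1 + t + (i : ℕ) ≤ t := fun _ => by omega
  rw [Fin.univ_val_map, List.ofFn_add, List.ofFn_add, show 1 + t + m - t - 1 = m by omega]
  simp [completeSplitEigenvalue, hclique, hindep]
  rw [← Multiset.cons_coe, ← Multiset.coe_add, Multiset.coe_replicate, Multiset.coe_replicate,
    ← Multiset.singleton_add]
  abel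

end CompleteSplit

theorem stmt14 (n t : ℕ) (ht1 : 1 ≤ t) (ht2 : t ≤ n - 1)
    (hM : (distLap (completeSplit n t)).IsHermitian) :
    eigMultiset _ hM =
      Multiset.replicate (n - t - 1) (2 * (n : ℝ) - t) +
        Multiset.replicate t (n : ℝ) + {(0 : ℝ)} ∧
      2 * wiener (completeSplit n t) =
        2 * (n : ℝ) * ((n : ℝ) - t - 1) + t * ((t : ℝ) + 1) := by
  have htn : t < n := by omega
  have hspec : eigMultiset _ hM = Multiset.replicate (n - t - 1) (2 * (n : ℝ) - t) +
      Multiset.replicate t (n : ℝ) + {(0 : ℝ)} := by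
    rw [eigMultiset_eq_map_of_orthogonal_eigenvectors hM
      (distLap_completeSplit_mulVec_eigenvector ht1 htn.le) (completeSplitEigenvector_ne_zero htn)
      (fun _ _ => completeSplitEigenvector_dotProduct htn), map_completeSplitEigenvalue htn]
  refine ⟨hspec, ?_⟩
  have htrace : (distLap (completeSplit n t)).trace = (eigMultiset _ hM).sum := by
    simp [hM.trace_eq_sum_eigenvalues, eigMultiset, Finset.sum_eq_multiset_sum]
  rw [two_mul_wiener_eq_trace_distLap, htrace, hspec]
  have hcast : ((n - t - 1 : ℕ) : ℝ) = n - t - 1 := by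
    rw [Nat.sub_sub, Nat.cast_sub (by omega), Nat.cast_add, Nat.cast_one, sub_add_eq_sub_sub]
  simp [hcast]
  ring
end

section
/- The distance Laplacian spectrum of the graph K_k ∇ (K_t ∪ K_{n−k−t}) is { 2n−k with multiplicity 1, (2n−t−k) with multiplicity t−1, (n+t) with multiplicity n−t−k−1, n with multiplicity k, 0 with multiplicity 1 }, and its Wiener index W satisfies 2W = n² − n + 2nt − 2t² − 2kt. -/
open Finset Matrix BigOperators

variable {V : Type*} [Fintype V] [DecidableEq V]

/-- The graph `K_k ∇ (K_t ∪ K_{n-k-t})` on `Fin n`: the first `k` vertices form a clique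
joined to everything, the next `t` vertices form a clique, the remaining form a clique. -/
def joinCliques (n k t : ℕ) : SimpleGraph (Fin n) :=
  SimpleGraph.fromRel (fun u v =>
    (u : ℕ) < k ∨ (v : ℕ) < k ∨ (((u : ℕ) < k + t) ↔ ((v : ℕ) < k + t)))


/-!
The distance Laplacian of `K_k ∇ (K_t ∪ K_s)`, `s = n - k - t`, has an explicit orthogonal
eigenbasis. Every vertex is adjacent to the hub `K_k`, so distinct vertices are at distance 1,
except for the distance 2 between the two side cliques: the distance matrix is
`J - I + l rᵀ + r lᵀ`, where `l`, `r` are the indicator vectors of `K_t`, `K_s`. A vector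
supported on one clique with zero sum is therefore an eigenvector, with eigenvalue one more than
the transmission on that clique, and in a clique of size `m` the Helmert contrasts give `m - 1`
orthogonal ones. The three remaining eigenvectors are constant on each clique: the all-ones
vector (eigenvalue 0), `(t + s) 1_{K_k} - k 1_{K_t ∪ K_s}` (eigenvalue `n`) and `s l - t r`
(eigenvalue `n + s + t`). Orthogonal nonzero eigenvectors are linearly independent, so they
diagonalize the matrix. The Wiener index is half the sum of the transmissions `n - 1`,
`n - 1 + s`, `n - 1 + t` on the three cliques.
-/

open Polynomial in
theorem charpoly_eq_prod_of_linearIndependent_eigenvectors {K ι : Type*} [Field K] [Fintype ι]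
    [DecidableEq ι] {M : Matrix ι ι K} {v : ι → ι → K} {d : ι → K} (hv : LinearIndependent K v)
    (heig : ∀ j, M *ᵥ v j = d j • v j) : M.charpoly = ∏ j, (X - C (d j)) := by
  have hP : IsUnit (of v)ᵀ := linearIndependent_cols_iff_isUnit.mp hv
  have hMP : M * (of v)ᵀ = (of v)ᵀ * diagonal d := by
    ext i j
    rw [mul_diagonal]
    simpa [mul_comm, Matrix.mul_apply, mulVec, dotProduct] using congrFun (heig j) i
  rw [← charpoly_diagonal, ← charpoly_units_conj hP.unit (diagonal d), IsUnit.unit_spec, ← hMP,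
    mul_assoc, mul_nonsing_inv _ ((isUnit_iff_isUnit_det _).mp hP), mul_one]

theorem eigMultiset_eq_of_linearIndependent_eigenvectors {ι : Type*} [Fintype ι] [DecidableEq ι]
    {M : Matrix ι ι ℝ} (hM : M.IsHermitian) {v : ι → ι → ℝ} {d : ι → ℝ}
    (hv : LinearIndependent ℝ v) (heig : ∀ j, M *ᵥ v j = d j • v j) :
    eigMultiset M hM = univ.val.map d := by
  have := congrArg Polynomial.roots (charpoly_eq_prod_of_linearIndependent_eigenvectors hv heig)
  rw [hM.roots_charpoly_eq_eigenvalues,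
    Polynomial.roots_prod _ _ (prod_ne_zero_iff.mpr fun j _ => Polynomial.X_sub_C_ne_zero (d j))]
    at this
  simpa [eigMultiset] using this

theorem linearIndependent_of_pairwise_dotProduct_eq_zero {K ι : Type*} [Field K] [LinearOrder K]
    [IsStrictOrderedRing K] [Fintype ι] {v : ι → ι → K} (hv : ∀ j, v j ≠ 0)
    (horth : Pairwise fun i j => v i ⬝ᵥ v j = 0) : LinearIndependent K v := by
  rw [Fintype.linearIndependent_iff]
  intro g hg j
  have hj := congrArg (· ⬝ᵥ v j) hg
  simp only [sum_dotProduct, smul_dotProduct, zero_dotProduct] at hj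
  rw [sum_eq_single j (fun i _ hij => by rw [horth hij, smul_zero]) (by simp)] at hj
  exact (mul_eq_zero.mp hj).resolve_right (mt dotProduct_self_eq_zero.mp (hv j))

theorem dotProduct_eq_zero_of_eq_on_support {R ι : Type*} [Semiring R] [Fintype ι]
    {x y : ι → R} {c : R} (hy : ∀ u, x u ≠ 0 → y u = c) (hx : ∑ u, x u = 0) : y ⬝ᵥ x = 0 := by
  have hyx : ∀ u, y u * x u = c * x u := fun u => by
    by_cases h : x u = 0
    · simp [h]
    · rw [hy u h]
  simp only [dotProduct, hyx, ← mul_sum, hx, mul_zero]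

theorem Fin.sum_boole_Ico {R : Type*} [Semiring R] {n : ℕ} (a b : ℕ) (hb : b ≤ n) :
    ∑ u : Fin n, (if a ≤ (u : ℕ) ∧ (u : ℕ) < b then (1 : R) else 0) = ((b - a : ℕ) : R) := by
  rw [Fin.sum_univ_eq_sum_range (fun i => if a ≤ i ∧ i < b then (1 : R) else 0), sum_boole,
    ← Nat.card_Ico]
  congr 3
  ext i
  simp only [mem_filter, mem_range, mem_Ico]
  omega

theorem Multiset.map_range_eq_univ_val_map {α : Type*} (n : ℕ) (f : ℕ → α) :
    (range n).map f = univ.val.map (fun j : Fin n => f j) := by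
  rw [Fin.univ_val_map, List.ofFn_eq_map, range, ← List.map_coe_finRange_eq_range, map_coe,
    List.map_map]
  rfl

theorem Multiset.map_range_add_one_add {α : Type*} (f : ℕ → α) (m r : ℕ) (c : α)
    (hc : ∀ i < r, f (m + 1 + i) = c) :
    (range (m + 1 + r)).map f = (range m).map f + {f m} + replicate r c := by
  rw [range_add, range_succ, map_add, map_cons, map_map, ← singleton_add, add_comm {f m}]
  congr 1
  refine eq_replicate.mpr ⟨by simp, fun b hb => ?_⟩
  obtain ⟨i, hi, rfl⟩ := mem_map.mp hb
  exact hc i (mem_range.mp hi)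

theorem SimpleGraph.dist_eq_two_of_adj_of_adj {W : Type*} {G : SimpleGraph W} {u v w : W}
    (hne : u ≠ v) (hnadj : ¬G.Adj u v) (hu : G.Adj u w) (hv : G.Adj v w) : G.dist u v = 2 := by
  rw [dist, ENat.toNat_eq_iff two_ne_zero, Nat.cast_ofNat, edist_eq_two_iff]
  exact ⟨hne, hnadj, w, hu, hv⟩

theorem transmission_eq_distMatrix_mulVec_one {W : Type*} [Fintype W] (G : SimpleGraph W)
    (v : W) : (transmission G v : ℝ) = (distMatrix G *ᵥ 1) v := by
  simp [transmission, distMatrix, mulVec, dotProduct]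

theorem distLap_eq_diagonal_sub (G : SimpleGraph V) :
    distLap G = diagonal (distMatrix G *ᵥ 1) - distMatrix G := by
  simp only [distLap, transmission_eq_distMatrix_mulVec_one]

namespace JoinCliques

variable {n : ℕ}

def blockStart (k t i : ℕ) : ℕ := if i < k then 0 else if i < k + t then k else k + t

def blockVec (k t : ℕ) (α β γ : ℝ) (u : Fin n) : ℝ :=
  if (u : ℕ) < k then α else if (u : ℕ) < k + t then β else γ

def helmert (k t : ℕ) (j u : Fin n) : ℝ :=
  if blockStart k t j ≤ u ∧ (u : ℕ) < j then 1
  else if u = j then -(((j : ℕ) - blockStart k t j : ℕ) : ℝ) else 0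

def eigvec (k t s : ℕ) (j : Fin n) : Fin n → ℝ :=
  if (j : ℕ) = 0 then blockVec k t 1 1 1
  else if (j : ℕ) = k then blockVec k t (t + s) (-k) (-k)
  else if (j : ℕ) = k + t then blockVec k t 0 s (-t)
  else helmert k t j

def eigval (n k t s j : ℕ) : ℝ :=
  if j = 0 then 0 else if j ≤ k then n else if j < k + t then n + s
  else if j = k + t then n + s + t else n + t

variable {k t s : ℕ}

theorem blockStart_le (i : ℕ) : blockStart k t i ≤ i := by
  unfold blockStart; split_ifs <;> omega

theorem blockStart_eq_of_le_of_le {i j : ℕ} (h₁ : blockStart k t j ≤ i) (h₂ : i ≤ j) :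
    blockStart k t i = blockStart k t j := by
  unfold blockStart at *; split_ifs at * <;> omega

theorem blockVec_eq_of_blockStart_eq {u v : Fin n} (h : blockStart k t u = blockStart k t v)
    (α β γ : ℝ) : blockVec k t α β γ u = blockVec k t α β γ v := by
  unfold blockStart at h; unfold blockVec; split_ifs at h ⊢ <;> first | rfl | omega

theorem blockVec_one : blockVec (n := n) k t 1 1 1 = 1 := by
  ext u; unfold blockVec; split_ifs <;> rfl

theorem blockVec_mul (α β γ α' β' γ' : ℝ) :
    blockVec (n := n) k t α β γ * blockVec k t α' β' γ' =
      blockVec k t (α * α') (β * β') (γ * γ') := by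
  ext u; simp only [Pi.mul_apply, blockVec]; split_ifs <;> rfl

theorem sum_blockVec (hn : k + t + s = n) (α β γ : ℝ) :
    ∑ u : Fin n, blockVec k t α β γ u = k * α + t * β + s * γ := by
  have hsplit : ∀ u : Fin n, blockVec k t α β γ u =
      α * (if 0 ≤ (u : ℕ) ∧ (u : ℕ) < k then 1 else 0) +
      β * (if k ≤ (u : ℕ) ∧ (u : ℕ) < k + t then 1 else 0) +
      γ * (if k + t ≤ (u : ℕ) ∧ (u : ℕ) < n then 1 else 0) := fun u => by
    have := u.isLt
    unfold blockVec; split_ifs <;> first | (exfalso; omega) | ring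
  simp only [hsplit, sum_add_distrib, ← mul_sum]
  rw [Fin.sum_boole_Ico _ _ (by omega), Fin.sum_boole_Ico _ _ (by omega),
    Fin.sum_boole_Ico _ _ (by omega), ← hn]
  push_cast [Nat.sub_zero, Nat.add_sub_cancel_left]
  ring

theorem blockVec_dotProduct_blockVec (hn : k + t + s = n) (α β γ α' β' γ' : ℝ) :
    blockVec (n := n) k t α β γ ⬝ᵥ blockVec k t α' β' γ' =
      k * (α * α') + t * (β * β') + s * (γ * γ') := by
  rw [← sum_blockVec hn]
  exact sum_congr rfl fun u _ => congrFun (blockVec_mul α β γ α' β' γ') u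

theorem le_of_helmert_ne_zero {j u : Fin n} (h : helmert k t j u ≠ 0) :
    blockStart k t j ≤ u ∧ (u : ℕ) ≤ j := by
  unfold helmert at h
  split_ifs at h with h₁ h₂
  · omega
  · subst h₂; exact ⟨blockStart_le _, le_rfl⟩
  · exact absurd rfl h

theorem blockStart_eq_of_helmert_ne_zero {j u : Fin n} (h : helmert k t j u ≠ 0) :
    blockStart k t u = blockStart k t j :=
  blockStart_eq_of_le_of_le (le_of_helmert_ne_zero h).1 (le_of_helmert_ne_zero h).2

theorem sum_helmert (j : Fin n) : ∑ u, helmert k t j u = 0 := by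
  have hsplit : ∀ u, helmert k t j u =
      (if blockStart k t j ≤ u ∧ (u : ℕ) < j then 1 else 0) +
      (if u = j then -(((j : ℕ) - blockStart k t j : ℕ) : ℝ) else 0) := fun u => by
    unfold helmert; split_ifs with h₁ h₂ <;> first | (subst h₂; omega) | simp
  simp only [hsplit, sum_add_distrib, Fin.sum_boole_Ico _ _ j.isLt.le, sum_ite_eq', mem_univ,
    if_true, add_neg_cancel]

theorem helmert_apply_of_lt {i j u : Fin n} (hij : i < j) (hu : helmert k t i u ≠ 0) :
    helmert k t j u = if blockStart k t i = blockStart k t j then 1 else 0 := by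
  obtain ⟨h₁, h₂⟩ := le_of_helmert_ne_zero hu
  rw [Fin.lt_def] at hij
  have hj := blockStart_le (k := k) (t := t) j
  unfold helmert blockStart at *
  split_ifs at * <;> first | rfl | (exfalso; omega)

theorem helmert_dotProduct_helmert {i j : Fin n} (hij : i ≠ j) :
    helmert k t i ⬝ᵥ helmert k t j = 0 := by
  rcases lt_or_gt_of_ne hij with h | h
  · rw [dotProduct_comm]
    exact dotProduct_eq_zero_of_eq_on_support (fun _ hu => helmert_apply_of_lt h hu)
      (sum_helmert i)
  · exact dotProduct_eq_zero_of_eq_on_support (fun _ hu => helmert_apply_of_lt h hu)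
      (sum_helmert j)

theorem blockVec_dotProduct_helmert (α β γ : ℝ) (j : Fin n) :
    blockVec k t α β γ ⬝ᵥ helmert k t j = 0 :=
  dotProduct_eq_zero_of_eq_on_support
    (fun _ hu => blockVec_eq_of_blockStart_eq (blockStart_eq_of_helmert_ne_zero hu) α β γ)
    (sum_helmert j)

theorem helmert_ne_zero {j : Fin n} (hj : blockStart k t j ≠ j) : helmert k t j ≠ 0 := by
  intro h
  have hjj := congrFun h j
  have hlt : blockStart k t j < j := lt_of_le_of_ne (blockStart_le _) hj
  simp only [helmert, lt_irrefl, and_false, if_false, if_true, Pi.zero_apply, neg_eq_zero,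
    Nat.cast_eq_zero] at hjj
  omega

theorem adj_iff {u v : Fin n} : (joinCliques n k t).Adj u v ↔
    u ≠ v ∧ ((u : ℕ) < k ∨ (v : ℕ) < k ∨ ((u : ℕ) < k + t ↔ (v : ℕ) < k + t)) := by
  simp only [joinCliques, SimpleGraph.fromRel_adj]
  tauto

theorem distMatrix_eq (hk : 1 ≤ k) :
    distMatrix (joinCliques n k t) = of (fun _ _ => 1) - 1 +
      vecMulVec (blockVec k t 0 1 0) (blockVec k t 0 0 1) +
      vecMulVec (blockVec k t 0 0 1) (blockVec k t 0 1 0) := by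
  ext u v
  simp only [distMatrix, Matrix.add_apply, Matrix.sub_apply, of_apply, one_apply,
    vecMulVec_apply, blockVec]
  by_cases huv : u = v
  · subst huv; simp only [SimpleGraph.dist_self]; split_ifs <;> simp
  by_cases hadj : (joinCliques n k t).Adj u v
  · rw [SimpleGraph.dist_eq_one_iff_adj.mpr hadj]
    rw [adj_iff] at hadj
    split_ifs <;> first | (exfalso; omega) | simp
  · have hhub : ∀ w : Fin n, k ≤ (w : ℕ) → (joinCliques n k t).Adj w ⟨0, by omega⟩ :=
      fun w hw => adj_iff.mpr ⟨fun h => by simp [h] at hw; omega, Or.inr (Or.inl hk)⟩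
    have hu : k ≤ (u : ℕ) := by by_contra; exact hadj (adj_iff.mpr ⟨huv, by omega⟩)
    have hv : k ≤ (v : ℕ) := by by_contra; exact hadj (adj_iff.mpr ⟨huv, by omega⟩)
    rw [SimpleGraph.dist_eq_two_of_adj_of_adj huv hadj (hhub u hu) (hhub v hv)]
    rw [adj_iff] at hadj
    split_ifs <;> first | (exfalso; omega) | norm_num

theorem distMatrix_mulVec (hk : 1 ≤ k) (x : Fin n → ℝ) :
    distMatrix (joinCliques n k t) *ᵥ x = (∑ u, x u) • 1 - x +
      (blockVec k t 0 0 1 ⬝ᵥ x) • blockVec k t 0 1 0 +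
      (blockVec k t 0 1 0 ⬝ᵥ x) • blockVec k t 0 0 1 := by
  rw [distMatrix_eq hk, add_mulVec, add_mulVec, sub_mulVec, one_mulVec,
    vecMulVec_mulVec, vecMulVec_mulVec, op_smul_eq_smul, op_smul_eq_smul]
  congr 3
  ext u
  simp [mulVec, dotProduct]

theorem distMatrix_mulVec_blockVec (hk : 1 ≤ k) (hn : k + t + s = n) (α β γ : ℝ) :
    distMatrix (joinCliques n k t) *ᵥ blockVec k t α β γ =
      (k * α + t * β + s * γ) • 1 - blockVec k t α (β - s * γ) (γ - t * β) := by
  rw [distMatrix_mulVec hk, sum_blockVec hn, blockVec_dotProduct_blockVec hn,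
    blockVec_dotProduct_blockVec hn]
  ext u
  simp only [Pi.add_apply, Pi.sub_apply, Pi.smul_apply, Pi.one_apply, smul_eq_mul, blockVec]
  split_ifs <;> ring

theorem distLap_mulVec_blockVec (hk : 1 ≤ k) (hn : k + t + s = n) (α β γ : ℝ) :
    distLap (joinCliques n k t) *ᵥ blockVec k t α β γ =
      blockVec k t (n * α) ((n + s) * β - s * γ) ((n + t) * γ - t * β) -
        (k * α + t * β + s * γ) • 1 := by
  have hnR : (n : ℝ) = k + t + s := by exact_mod_cast hn.symm
  rw [distLap_eq_diagonal_sub, sub_mulVec, ← blockVec_one,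
    distMatrix_mulVec_blockVec hk hn, distMatrix_mulVec_blockVec hk hn]
  ext u
  simp only [Pi.sub_apply, Pi.smul_apply, smul_eq_mul, mulVec_diagonal, blockVec_one,
    Pi.one_apply, blockVec, hnR]
  split_ifs <;> ring

theorem distLap_mulVec_of_supported (hk : 1 ≤ k) (hn : k + t + s = n)
    {x : Fin n → ℝ} (j : Fin n) (hx : ∀ u, x u ≠ 0 → blockStart k t u = blockStart k t j)
    (hsum : ∑ u, x u = 0) :
    distLap (joinCliques n k t) *ᵥ x = blockVec k t n (n + s) (n + t) j • x := by
  have hblock : ∀ α β γ, blockVec k t α β γ ⬝ᵥ x = 0 := fun α β γ =>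
    dotProduct_eq_zero_of_eq_on_support
      (fun u hu => blockVec_eq_of_blockStart_eq (hx u hu) α β γ) hsum
  have hnR : (n : ℝ) = k + t + s := by exact_mod_cast hn.symm
  rw [distLap_eq_diagonal_sub, sub_mulVec, ← blockVec_one, distMatrix_mulVec_blockVec hk hn,
    distMatrix_mulVec hk, hsum, hblock, hblock]
  ext u
  simp only [Pi.sub_apply, Pi.neg_apply, Pi.smul_apply, smul_eq_mul, mulVec_diagonal, zero_smul,
    add_zero, zero_sub]
  by_cases hu : x u = 0
  · simp [hu]
  · rw [blockVec_eq_of_blockStart_eq (hx u hu), hnR]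
    simp only [blockVec, Pi.one_apply]
    split_ifs <;> ring

theorem distLap_mulVec_eigvec (hk : 1 ≤ k) (hn : k + t + s = n) (j : Fin n) :
    distLap (joinCliques n k t) *ᵥ eigvec k t s j = eigval n k t s j • eigvec k t s j := by
  have hnR : (n : ℝ) = k + t + s := by exact_mod_cast hn.symm
  unfold eigvec eigval
  split_ifs <;> first
    | (exfalso; omega)
    | (rw [distLap_mulVec_blockVec hk hn]
       ext u
       simp only [Pi.sub_apply, Pi.smul_apply, smul_eq_mul, Pi.one_apply, blockVec, hnR]
       split_ifs <;> ring1)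
    | (rw [distLap_mulVec_of_supported hk hn j
         (fun _ hu => blockStart_eq_of_helmert_ne_zero hu) (sum_helmert j)]
       congr 1
       unfold blockVec
       split_ifs <;> first | rfl | (exfalso; omega))

theorem eigvec_pairwise_orthogonal (hn : k + t + s = n) :
    Pairwise fun i j : Fin n => eigvec k t s i ⬝ᵥ eigvec k t s j = 0 := by
  intro i j hij
  have hij' : (i : ℕ) ≠ j := Fin.val_ne_of_ne hij
  unfold eigvec
  split_ifs <;> first
    | (exfalso; omega)
    | (rw [blockVec_dotProduct_blockVec hn]; ring)
    | exact blockVec_dotProduct_helmert _ _ _ _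
    | (rw [dotProduct_comm]; exact blockVec_dotProduct_helmert _ _ _ _)
    | exact helmert_dotProduct_helmert hij

theorem eigvec_ne_zero (j : Fin n) : eigvec k t s j ≠ 0 := by
  unfold eigvec
  split_ifs with h0 hk hkt <;> intro h
  · simpa [blockVec, h0] using congrFun h j
  · have hj := congrFun h j
    simp [blockVec, hk] at hj
    omega
  · have hj := congrFun h j
    simp [blockVec, hkt] at hj
    omega
  · refine helmert_ne_zero (fun hj => ?_) h
    unfold blockStart at hj
    split_ifs at hj <;> omega

theorem eigMultiset_distLap (hk : 1 ≤ k) (hn : k + t + s = n)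
    (hM : (distLap (joinCliques n k t)).IsHermitian) :
    eigMultiset _ hM = (Multiset.range n).map (eigval n k t s) := by
  rw [Multiset.map_range_eq_univ_val_map]
  exact eigMultiset_eq_of_linearIndependent_eigenvectors hM
    (linearIndependent_of_pairwise_dotProduct_eq_zero eigvec_ne_zero
      (eigvec_pairwise_orthogonal hn))
    (distLap_mulVec_eigvec hk hn)

theorem map_range_eigval (hk : 1 ≤ k) (ht : 1 ≤ t) (hs : 1 ≤ s) (hn : k + t + s = n) :
    (Multiset.range n).map (eigval n k t s) =
      {(n : ℝ) + s + t} + Multiset.replicate (t - 1) ((n : ℝ) + s) +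
        Multiset.replicate (s - 1) ((n : ℝ) + t) + Multiset.replicate k (n : ℝ) + {0} := by
  rw [show Multiset.range n = Multiset.range (0 + 1 + (k - 1) + 1 + (t - 1) + 1 + (s - 1)) by
    congr 1; omega]
  have heig_k : eigval n k t s (0 + 1 + (k - 1)) = n := by
    unfold eigval; split_ifs <;> first | rfl | omega
  have heig_kt : eigval n k t s (0 + 1 + (k - 1) + 1 + (t - 1)) = n + s + t := by
    unfold eigval; split_ifs <;> first | rfl | omega
  have hrep : Multiset.replicate k (n : ℝ) = Multiset.replicate (k - 1) (n : ℝ) + {(n : ℝ)} := by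
    rw [← Multiset.replicate_one, ← Multiset.replicate_add, Nat.sub_add_cancel hk]
  rw [Multiset.map_range_add_one_add _ _ _ ((n : ℝ) + t),
    Multiset.map_range_add_one_add _ _ _ ((n : ℝ) + s),
    Multiset.map_range_add_one_add _ _ _ (n : ℝ), heig_k, heig_kt, hrep]
  · simp only [Multiset.range_zero, Multiset.map_zero, eigval, if_true, zero_add]
    ac_rfl
  all_goals intro i hi; unfold eigval; split_ifs <;> first | rfl | omega

theorem two_mul_wiener (hk : 1 ≤ k) (hn : k + t + s = n) :
    2 * wiener (joinCliques n k t) = (n : ℝ) ^ 2 - n + 2 * t * s := by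
  have hnR : (n : ℝ) = k + t + s := by exact_mod_cast hn.symm
  rw [wiener, mul_div_cancel₀ _ two_ne_zero]
  simp only [transmission_eq_distMatrix_mulVec_one]
  rw [← blockVec_one (k := k) (t := t), distMatrix_mulVec_blockVec hk hn]
  simp only [Pi.sub_apply, Pi.smul_apply, Pi.one_apply, smul_eq_mul, mul_one, sum_sub_distrib,
    sum_const, card_univ, Fintype.card_fin, nsmul_eq_mul, sum_blockVec hn, hnR]
  ring

end JoinCliques

theorem stmt18 (n k t : ℕ) (hk : 1 ≤ k) (ht1 : 1 ≤ t) (ht2 : t ≤ (n - k) / 2)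
    (hM : (distLap (joinCliques n k t)).IsHermitian) :
    eigMultiset _ hM =
      {2 * (n : ℝ) - k} + Multiset.replicate (t - 1) (2 * (n : ℝ) - t - k) +
        Multiset.replicate (n - t - k - 1) ((n : ℝ) + t) +
        Multiset.replicate k (n : ℝ) + {(0 : ℝ)} ∧
      2 * wiener (joinCliques n k t) =
        (n : ℝ) ^ 2 - n + 2 * n * t - 2 * (t : ℝ) ^ 2 - 2 * k * t := by
  obtain ⟨s, hn, hs⟩ : ∃ s, k + t + s = n ∧ 1 ≤ s := ⟨n - k - t, by omega, by omega⟩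
  have hnR : (n : ℝ) = k + t + s := by exact_mod_cast hn.symm
  refine ⟨?_, ?_⟩
  · rw [JoinCliques.eigMultiset_distLap hk hn, JoinCliques.map_range_eigval hk ht1 hs hn,
      show n - t - k - 1 = s - 1 by omega, show 2 * (n : ℝ) - k = n + s + t by linarith,
      show 2 * (n : ℝ) - t - k = n + s by linarith]
  · rw [JoinCliques.two_mul_wiener hk hn, hnR]
    ring
end
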